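/- arXiv:math/0501494 — 12 statements merged into one kernel-verified Lean document; each statement's English description precedes it below -/
import Mathlib

section
/- Let T be a standard Young tableau of shape τ (a partition of N). For 1 ≤ i ≤ N let η_i(T) = c_i - r_i where (r_i, c_i) is the (row, column) position of entry i in T (the content of the node containing i). If η_{s+1}(T) ≤ η_s(T) + 1 for all 1 ≤ s < N, then T is the row-superstandard tableau T_0, i.e., the tableau obtained by filling the numbers 1, 2, …, N row by row (first row 1,…,τ_1; second row τ_1+1,…,τ_1+τ_2; and so on). -/
/-- Membership in the Ferrers diagram of `τ` (1-based): row `i ≥ 1`, column `1 ≤ j ≤ τ_i`. -/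
def InDiagram (τ : ℕ → ℕ) (i j : ℕ) : Prop := 1 ≤ i ∧ 1 ≤ j ∧ j ≤ τ i

/-- Partial row sums of the shape. -/
def Srow (τ : ℕ → ℕ) (a : ℕ) : ℕ := ∑ i ∈ Finset.Icc 1 a, τ i

lemma Srow_mono (τ : ℕ → ℕ) {a b : ℕ} (h : a ≤ b) : Srow τ a ≤ Srow τ b :=
  Finset.sum_le_sum_of_subset (Finset.Icc_subset_Icc_right h)

lemma Srow_step (τ : ℕ → ℕ) {i : ℕ} (hi : 1 ≤ i) :
    Srow τ i = Srow τ (i - 1) + τ i := by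
  obtain ⟨m, rfl⟩ : ∃ m, i = m + 1 := ⟨i - 1, by omega⟩
  simp only [Srow, Nat.add_sub_cancel]
  exact Finset.sum_Icc_succ_top (by omega) τ

lemma rep_lt (τ : ℕ → ℕ) {i j i' j' : ℕ} (hii : i < i')
    (hd : InDiagram τ i j) (hj' : 1 ≤ j') :
    Srow τ (i - 1) + j < Srow τ (i' - 1) + j' := by
  obtain ⟨hi1, hj1, hjτ⟩ := hd
  have h1 : Srow τ (i - 1) + j ≤ Srow τ i := by
    rw [Srow_step τ hi1]; omega
  have h2 : Srow τ i ≤ Srow τ (i' - 1) := Srow_mono τ (by omega)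
  omega

lemma rep_unique (τ : ℕ → ℕ) {i j i' j' : ℕ}
    (hd : InDiagram τ i j) (hd' : InDiagram τ i' j')
    (h : Srow τ (i - 1) + j = Srow τ (i' - 1) + j') : i = i' ∧ j = j' := by
  rcases lt_trichotomy i i' with hlt | heq | hgt
  · exact absurd h (Nat.ne_of_lt (rep_lt τ hlt hd hd'.2.1))
  · subst heq; exact ⟨rfl, by omega⟩
  · exact absurd h.symm (Nat.ne_of_lt (rep_lt τ hgt hd' hd.2.1))

/-- if a standard Young tableau `T` of shape `τ` (a partition of `N`)
satisfies `η_{s+1}(T) ≤ η_s(T) + 1` for all `1 ≤ s < N`, where `η_k(T)` is the content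
(column minus row) of the node containing `k`, then `T` is the row-superstandard tableau
`T₀`, i.e. `T(i,j) = τ_1 + ⋯ + τ_{i-1} + j`. -/
theorem syt_content_condition_implies_superstandard
    (N : ℕ) (τ : ℕ → ℕ) (T : ℕ → ℕ → ℕ) (rowOf colOf : ℕ → ℕ)
    (hτdec : ∀ i, 1 ≤ i → τ (i + 1) ≤ τ i)
    (hτ0 : ∀ i, N < i → τ i = 0)
    (hτsum : ∑ i ∈ Finset.Icc 1 N, τ i = N)
    (hrange : ∀ i j, InDiagram τ i j → 1 ≤ T i j ∧ T i j ≤ N)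
    (hbij : ∀ k, 1 ≤ k → k ≤ N → ∃! p : ℕ × ℕ, InDiagram τ p.1 p.2 ∧ T p.1 p.2 = k)
    (hrow : ∀ i j, InDiagram τ i j → InDiagram τ i (j + 1) → T i j < T i (j + 1))
    (hcol : ∀ i j, InDiagram τ i j → InDiagram τ (i + 1) j → T i j < T (i + 1) j)
    (hpos : ∀ k, 1 ≤ k → k ≤ N →
      InDiagram τ (rowOf k) (colOf k) ∧ T (rowOf k) (colOf k) = k)
    (hη : ∀ s, 1 ≤ s → s < N →
      ((colOf (s + 1) : ℤ) - rowOf (s + 1)) ≤ ((colOf s : ℤ) - rowOf s) + 1) :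
    ∀ i j, InDiagram τ i j → T i j = (∑ r ∈ Finset.Icc 1 (i - 1), τ r) + j := by
  -- the unique-position extraction lemma
  have huniq : ∀ k, 1 ≤ k → k ≤ N → ∀ i j, InDiagram τ i j → T i j = k →
      i = rowOf k ∧ j = colOf k := by
    intro k hk1 hkN i j hij hT
    obtain ⟨p, _, hup⟩ := hbij k hk1 hkN
    have h1 : ((i, j) : ℕ × ℕ) = p := hup (i, j) ⟨hij, hT⟩
    have h2 : ((rowOf k, colOf k) : ℕ × ℕ) = p :=
      hup (rowOf k, colOf k) ⟨(hpos k hk1 hkN).1, (hpos k hk1 hkN).2⟩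
    rw [← h2] at h1
    exact ⟨(Prod.mk.injEq _ _ _ _).mp h1 |>.1, (Prod.mk.injEq _ _ _ _).mp h1 |>.2⟩
  -- main induction: entry t sits at its superstandard position
  have key : ∀ t, 1 ≤ t → t ≤ N → Srow τ (rowOf t - 1) + colOf t = t := by
    intro t
    induction t using Nat.strong_induction_on with
    | _ t IH =>
      intro ht1 htN
      obtain ⟨hdt, hTt⟩ := hpos t ht1 htN
      rcases Nat.lt_or_ge t 2 with ht2 | ht2
      · -- t = 1 : entry 1 is at (1,1)
        have ht : t = 1 := by omega
        subst ht
        have hr1 : rowOf 1 = 1 := by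
          by_contra hr
          have hr2 : 2 ≤ rowOf 1 := by
            have := hdt.1; omega
          have hdab : InDiagram τ (rowOf 1 - 1) (colOf 1) := by
            refine ⟨by omega, hdt.2.1, ?_⟩
            have := hτdec (rowOf 1 - 1) (by omega)
            have heq : rowOf 1 - 1 + 1 = rowOf 1 := by omega
            rw [heq] at this
            exact le_trans hdt.2.2 this
          have hlt := hcol (rowOf 1 - 1) (colOf 1) hdab
            (by rw [show rowOf 1 - 1 + 1 = rowOf 1 by omega]; exact hdt)
          rw [show rowOf 1 - 1 + 1 = rowOf 1 by omega, hTt] at hlt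
          have := (hrange (rowOf 1 - 1) (colOf 1) hdab).1
          omega
        have hc1 : colOf 1 = 1 := by
          by_contra hc
          have hc2 : 2 ≤ colOf 1 := by
            have := hdt.2.1; omega
          have hdle : InDiagram τ (rowOf 1) (colOf 1 - 1) :=
            ⟨hdt.1, by omega, by have := hdt.2.2; omega⟩
          have hlt := hrow (rowOf 1) (colOf 1 - 1) hdle
            (by rw [show colOf 1 - 1 + 1 = colOf 1 by omega]; exact hdt)
          rw [show colOf 1 - 1 + 1 = colOf 1 by omega, hTt] at hlt
          have := (hrange (rowOf 1) (colOf 1 - 1) hdle).1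
          omega
        rw [hr1, hc1]
        simp [Srow]
      · -- t = k + 1 with k ≥ 1
        obtain ⟨k, rfl⟩ : ∃ k, t = k + 1 := ⟨t - 1, by omega⟩
        have hk1 : 1 ≤ k := by omega
        -- filled cells have the superstandard value
        have filled_val : ∀ i j, InDiagram τ i j → Srow τ (i - 1) + j ≤ k →
            T i j = Srow τ (i - 1) + j := by
          intro i j hij hle
          set t0 := Srow τ (i - 1) + j with ht0
          have ht01 : 1 ≤ t0 := by have := hij.2.1; omega
          have ht0N : t0 ≤ N := by omega
          have hP := IH t0 (by omega) ht01 ht0N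
          obtain ⟨hd0, hT0⟩ := hpos t0 ht01 ht0N
          obtain ⟨hi, hj⟩ := rep_unique τ hd0 hij (by rw [hP])
          rw [← hi, ← hj, hT0]
        -- cells with small value are superstandard-filled
        have val_filled : ∀ i j, InDiagram τ i j → T i j ≤ k →
            Srow τ (i - 1) + j = T i j := by
          intro i j hij hle
          set t0 := T i j with ht0
          have hr0 := hrange i j hij
          have huv := huniq t0 hr0.1 hr0.2 i j hij rfl
          have hP := IH t0 (by omega) hr0.1 hr0.2
          rw [← huv.1, ← huv.2] at hP
          exact hP
        set R := rowOf (k + 1) with hRdef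
        set C := colOf (k + 1) with hCdef
        have hunf : k + 1 ≤ Srow τ (R - 1) + C := by
          by_contra hcon
          have := filled_val R C hdt (by omega)
          rw [hTt] at this
          omega
        rcases Nat.lt_or_ge C 2 with hC1 | hC2
        · -- C = 1
          have hC : C = 1 := by have := hdt.2.1; omega
          rcases Nat.lt_or_ge R 2 with hR1 | hR2
          · -- R = 1: impossible since (1,1) is already filled
            have hR : R = 1 := by have := hdt.1; omega
            rw [hR, hC] at hunf
            simp [Srow] at hunf
            omega
          · -- R ≥ 2
            -- the cell above (R-1, 1) is filled
            have hdab : InDiagram τ (R - 1) 1 := by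
              refine ⟨by omega, le_refl 1, ?_⟩
              have h1 := hτdec (R - 1) (by omega)
              rw [show R - 1 + 1 = R by omega] at h1
              have h2 := hdt.2.2
              omega
            have hdt1 : InDiagram τ R 1 := hC ▸ hdt
            have hTt1 : T R 1 = k + 1 := hC ▸ hTt
            have habove : Srow τ (R - 2) + 1 ≤ k := by
              have hlt := hcol (R - 1) 1 hdab
                (by rw [show R - 1 + 1 = R by omega]; exact hdt1)
              rw [show R - 1 + 1 = R by omega, hTt1] at hlt
              have := val_filled (R - 1) 1 hdab (by omega)
              rw [show R - 1 - 1 = R - 2 by omega] at this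
              omega
            by_cases hSR : Srow τ (R - 1) ≤ k
            · rw [hC]; omega
            · -- deviation case: derive a contradiction via the η-condition
              exfalso
              push_neg at hSR
              set r := R - 1 with hrdef
              set cc := k - Srow τ (R - 2) with hccdef
              have hr1 : 1 ≤ r := by omega
              have hcc1 : 1 ≤ cc := by omega
              have hSstep : Srow τ r = Srow τ (R - 2) + τ r :=
                by rw [Srow_step τ hr1, show r - 1 = R - 2 by omega]
              have hccτ : cc + 1 ≤ τ r := by omega
              have hdnext : InDiagram τ r (cc + 1) := ⟨hr1, by omega, hccτ⟩
              have hSrr : Srow τ (r - 1) = Srow τ (R - 2) := by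
                rw [show r - 1 = R - 2 by omega]
              set m := T r (cc + 1) with hmdef
              have hm := hrange r (cc + 1) hdnext
              have hmk : k + 2 ≤ m := by
                rcases Nat.lt_or_ge m (k + 1) with hm1 | hm2
                · have := val_filled r (cc + 1) hdnext (by omega)
                  rw [hSrr] at this
                  omega
                · rcases Nat.lt_or_ge m (k + 2) with hm3 | hm4
                  · exfalso
                    have hmeq : m = k + 1 := by omega
                    have := huniq (k + 1) (by omega) htN r (cc + 1) hdnext
                      (by rw [← hmdef, hmeq])
                    rw [← hRdef, ← hCdef] at this
                    omega
                  · exact hm4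
              have hposm := huniq m hm.1 hm.2 r (cc + 1) hdnext rfl
              -- L' : everything weakly southeast of (r, cc+1) has value ≥ m
              have Lrow : ∀ j, cc + 1 ≤ j → InDiagram τ r j → m ≤ T r j := by
                intro j hj
                induction j, hj using Nat.le_induction with
                | base => intro _; exact le_refl m
                | succ j hj IHj =>
                  intro hdj
                  have hdj' : InDiagram τ r j := ⟨hr1, by omega, by have := hdj.2.2; omega⟩
                  exact le_trans (IHj hdj') (le_of_lt (hrow r j hdj' hdj))
              have Lcol : ∀ i, r ≤ i → ∀ j, cc + 1 ≤ j → InDiagram τ i j → m ≤ T i j := by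
                intro i hi
                induction i, hi using Nat.le_induction with
                | base => exact fun j hj hd => Lrow j hj hd
                | succ i hi IHi =>
                  intro j hj hdj
                  have hdj' : InDiagram τ i j := by
                    refine ⟨by omega, hdj.2.1, ?_⟩
                    have := hτdec i (by omega)
                    have := hdj.2.2
                    omega
                  exact le_trans (IHi j hj hdj') (le_of_lt (hcol i j hdj' hdj))
              -- D : between k+1 and m, all contents stay ≤ cc - r - 1
              have D : ∀ t', k + 1 ≤ t' → t' < m →
                  (colOf t' : ℤ) - rowOf t' ≤ (cc : ℤ) - r - 1 := by
                intro t' ht'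
                induction t', ht' using Nat.le_induction with
                | base =>
                  intro _
                  rw [← hRdef, ← hCdef, hC]
                  have : (R : ℤ) = (r : ℤ) + 1 := by push_cast; omega
                  rw [this]
                  push_cast
                  omega
                | succ t' ht' IHt' =>
                  intro htm
                  have hprev := IHt' (by omega)
                  have hstep := hη t' (by omega) (by omega)
                  by_contra hcon
                  push_neg at hcon
                  have hge : (cc : ℤ) - r ≤ (colOf (t' + 1) : ℤ) - rowOf (t' + 1) := by omega
                  obtain ⟨hd1, hT1⟩ := hpos (t' + 1) (by omega) (by omega)
                  set i := rowOf (t' + 1) with hidef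
                  set j := colOf (t' + 1) with hjdef
                  have hunf1 : k + 1 ≤ Srow τ (i - 1) + j := by
                    by_contra hcon2
                    have := filled_val i j hd1 (by omega)
                    rw [hT1] at this
                    omega
                  have hir : r ≤ i := by
                    by_contra hcon2
                    push_neg at hcon2
                    have h1 : Srow τ (i - 1) + j ≤ Srow τ i := by
                      rw [Srow_step τ hd1.1]
                      have := hd1.2.2
                      omega
                    have h2 : Srow τ i ≤ Srow τ (R - 2) :=
                      Srow_mono τ (by omega)
                    omega
                  have hjc : cc + 1 ≤ j := by
                    rcases Nat.lt_or_ge j (cc + 1) with hj1 | hj2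
                    · exfalso
                      have hji : j = cc ∧ i = r := by
                        constructor <;> omega
                      rw [hji.1, hji.2, hSrr] at hunf1
                      omega
                    · exact hj2
                  have := Lcol i hir j hjc hd1
                  omega
              have hD := D (m - 1) (by omega) (by omega)
              have hstep := hη (m - 1) (by omega) (by omega)
              rw [show m - 1 + 1 = m by omega] at hstep
              rw [← hposm.1, ← hposm.2] at hstep
              push_cast at hstep hD ⊢
              omega
        · -- C ≥ 2 : the cell to the left is filled, so position is as required
          have hdle : InDiagram τ R (C - 1) :=
            ⟨hdt.1, by omega, by have := hdt.2.2; omega⟩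
          have hlt := hrow R (C - 1) hdle
            (by rw [show C - 1 + 1 = C by omega]; exact hdt)
          rw [show C - 1 + 1 = C by omega, hTt] at hlt
          have := val_filled R (C - 1) hdle (by omega)
          omega
  -- conclude
  intro i j hij
  have hr := hrange i j hij
  have hu := huniq (T i j) hr.1 hr.2 i j hij rfl
  have hk := key (T i j) hr.1 hr.2
  rw [← hu.1, ← hu.2] at hk
  exact hk.symm
end

section
/- Let λ be a partition and 1 ≤ s ≤ N, with n = λ_{ℓ(λ)} the smallest nonzero part of λ. Let ι(s;λ) : ℕ₀^N → ℕ₀^{N+ℓ(λ)} be the insertion map (ι(s;λ)α)_i = α_i for i ≤ s, = λ_{i-s} for s < i ≤ s+ℓ(λ), and = α_{i-ℓ(λ)} for s+ℓ(λ) < i. Suppose α ∈ ℕ₀^N satisfies α_i < n for 1 ≤ i ≤ s and α_i ≤ n for s < i ≤ N. Let β = ι(s;λ)α and k = ℓ(λ). Then r(β,i) = r(α,i) + k for 1 ≤ i ≤ s, r(β,i) = i - s for s+1 ≤ i ≤ s+k, and r(β,i) = r(α, i-k) + k for s+k < i ≤ N+k. -/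
/-- The rank function: `r(α,i) = #{j : α_j > α_i} + #{j ≤ i : α_j = α_i}`,
with indices running over `{1,…,N}`. -/
def rankF (N : ℕ) (α : ℕ → ℕ) (i : ℕ) : ℕ :=
  ((Finset.Icc 1 N).filter (fun j => α i < α j)).card +
  ((Finset.Icc 1 i).filter (fun j => α j = α i)).card

lemma rankF_eq (N : ℕ) (α : ℕ → ℕ) (i : ℕ) :
    rankF N α i = (∑ j ∈ Finset.Ioc 0 N, if α i < α j then 1 else 0) +
      ∑ j ∈ Finset.Ioc 0 i, if α j = α i then 1 else 0 := by
  rw [rankF, ← Finset.Icc_add_one_left_eq_Ioc, ← Finset.Icc_add_one_left_eq_Ioc, Finset.card_filter, Finset.card_filter, zero_add]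

lemma sum_Ioc_shift (f : ℕ → ℕ) (a b c : ℕ) :
    ∑ j ∈ Finset.Ioc (a + c) (b + c), f j = ∑ j ∈ Finset.Ioc a b, f (j + c) := by
  rw [← Finset.map_add_right_Ioc, Finset.sum_map]
  rfl

lemma sum_ones_Ioc (n : ℕ) (f : ℕ → ℕ) (h : ∀ j ∈ Finset.Ioc 0 n, f j = 1) :
    ∑ j ∈ Finset.Ioc 0 n, f j = n := by
  rw [Finset.sum_congr rfl h, Finset.sum_const, smul_eq_mul, mul_one, Nat.card_Ioc, Nat.sub_zero]

/-- rank equations for the insertion `β = ι(s;λ)α` of a partition `λ`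
(of length `k`, smallest part `n = λ_k`) after position `s`, where
`α_i < n` for `i ≤ s` and `α_i ≤ n` for `s < i ≤ N`. -/
theorem rank_of_insertion
    (N s k : ℕ) (lam α β : ℕ → ℕ)
    (hs1 : 1 ≤ s) (hsN : s ≤ N) (hk : 1 ≤ k)
    (hlamdec : ∀ i, 1 ≤ i → i < k → lam (i + 1) ≤ lam i)
    (hlampos : 0 < lam k)
    (hlam0 : ∀ i, k < i → lam i = 0)
    (hα1 : ∀ i, 1 ≤ i → i ≤ s → α i < lam k)
    (hα2 : ∀ i, s < i → i ≤ N → α i ≤ lam k)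
    (hβ : ∀ i, β i = if i ≤ s then α i else if i ≤ s + k then lam (i - s) else α (i - k)) :
    (∀ i, 1 ≤ i → i ≤ s → rankF (N + k) β i = rankF N α i + k) ∧
    (∀ i, s + 1 ≤ i → i ≤ s + k → rankF (N + k) β i = i - s) ∧
    (∀ i, s + k < i → i ≤ N + k → rankF (N + k) β i = rankF N α (i - k) + k) := by
  -- antitonicity of lam on [1,k]
  have anti : ∀ a b : ℕ, 1 ≤ a → a ≤ b → b ≤ k → lam b ≤ lam a := by
    intro a b ha hab
    induction b, hab using Nat.le_induction with
    | base => intro _; exact le_refl _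
    | succ b hb ih =>
      intro hbk
      exact le_trans (hlamdec b (le_trans ha hb) (by omega)) (ih (by omega))
  have hlamk : ∀ j, 1 ≤ j → j ≤ k → lam k ≤ lam j := fun j h1 h2 => anti j k h1 h2 le_rfl
  -- values of β on the three ranges
  have hβ1 : ∀ j, j ≤ s → β j = α j := fun j hj => by rw [hβ, if_pos hj]
  have hβ2 : ∀ j, 1 ≤ j → j ≤ k → β (j + s) = lam j := by
    intro j h1 h2
    rw [hβ, if_neg (show ¬ (j + s ≤ s) by omega), if_pos (show j + s ≤ s + k by omega)]
    congr 1
    omega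
  have hβ3 : ∀ j, s < j → β (j + k) = α j := by
    intro j h1
    rw [hβ, if_neg (show ¬ (j + k ≤ s) by omega), if_neg (show ¬ (j + k ≤ s + k) by omega)]
    congr 1
    omega
  -- decomposition of a sum of f ∘ β over Ioc 0 m, for s + k ≤ m
  have hsum : ∀ (m : ℕ) (f : ℕ → ℕ), s + k ≤ m →
      ∑ j ∈ Finset.Ioc 0 m, f (β j)
        = (∑ j ∈ Finset.Ioc 0 s, f (α j) + ∑ j ∈ Finset.Ioc 0 k, f (lam j))
          + ∑ j ∈ Finset.Ioc s (m - k), f (α j) := by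
    intro m f hm
    rw [← Finset.sum_Ioc_consecutive _ (Nat.zero_le (s + k)) hm,
        ← Finset.sum_Ioc_consecutive _ (Nat.zero_le s) (Nat.le_add_right s k)]
    congr 1
    · congr 1
      · exact Finset.sum_congr rfl (fun j hj => by
          rw [Finset.mem_Ioc] at hj
          rw [hβ1 j hj.2])
      · have h1 : Finset.Ioc s (s + k) = Finset.Ioc (0 + s) (k + s) := by
          congr 1 <;> omega
        rw [h1, sum_Ioc_shift]
        refine Finset.sum_congr rfl (fun j hj => ?_)
        rw [Finset.mem_Ioc] at hj
        rw [hβ2 j hj.1 hj.2]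
    · have h2 : Finset.Ioc (s + k) m = Finset.Ioc (s + k) ((m - k) + k) := by
        congr 1
        omega
      rw [h2, sum_Ioc_shift]
      refine Finset.sum_congr rfl (fun j hj => ?_)
      rw [Finset.mem_Ioc] at hj
      rw [hβ3 j (by omega)]
  refine ⟨?_, ?_, ?_⟩
  · -- Case 1 : 1 ≤ i ≤ s
    intro i hi1 his
    have hβi : β i = α i := hβ1 i his
    rw [rankF_eq, rankF_eq]
    simp only [hβi]
    have e1 : ∑ j ∈ Finset.Ioc 0 (N + k), (if α i < β j then 1 else 0)
        = (∑ j ∈ Finset.Ioc 0 s, (if α i < α j then 1 else 0)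
            + ∑ j ∈ Finset.Ioc 0 k, (if α i < lam j then 1 else 0))
          + ∑ j ∈ Finset.Ioc s ((N + k) - k), (if α i < α j then 1 else 0) :=
      hsum (N + k) (fun x => if α i < x then 1 else 0) (by omega)
    have e2 : ∑ j ∈ Finset.Ioc 0 k, (if α i < lam j then 1 else 0) = k := by
      refine sum_ones_Ioc k _ (fun j hj => ?_)
      rw [Finset.mem_Ioc] at hj
      exact if_pos (lt_of_lt_of_le (hα1 i hi1 his) (hlamk j hj.1 hj.2))
    have e3 : ∑ j ∈ Finset.Ioc 0 i, (if β j = α i then 1 else 0)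
        = ∑ j ∈ Finset.Ioc 0 i, (if α j = α i then 1 else 0) := by
      refine Finset.sum_congr rfl (fun j hj => ?_)
      rw [Finset.mem_Ioc] at hj
      rw [hβ1 j (by omega)]
    have e4 : ∑ j ∈ Finset.Ioc 0 s, (if α i < α j then 1 else 0)
          + ∑ j ∈ Finset.Ioc s N, (if α i < α j then 1 else 0)
        = ∑ j ∈ Finset.Ioc 0 N, (if α i < α j then 1 else 0) :=
      Finset.sum_Ioc_consecutive _ (Nat.zero_le s) hsN
    have hNk : (N + k) - k = N := by omega
    rw [hNk] at e1
    omega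
  · -- Case 2 : s + 1 ≤ i ≤ s + k
    intro i hi1 his
    have hβi : β i = lam (i - s) := by
      have h := hβ2 (i - s) (by omega) (by omega)
      rw [show (i - s) + s = i by omega] at h
      exact h
    rw [rankF_eq]
    simp only [hβi]
    have e1 : ∑ j ∈ Finset.Ioc 0 (N + k), (if lam (i - s) < β j then 1 else 0)
        = (∑ j ∈ Finset.Ioc 0 s, (if lam (i - s) < α j then 1 else 0)
            + ∑ j ∈ Finset.Ioc 0 k, (if lam (i - s) < lam j then 1 else 0))
          + ∑ j ∈ Finset.Ioc s ((N + k) - k), (if lam (i - s) < α j then 1 else 0) :=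
      hsum (N + k) (fun x => if lam (i - s) < x then 1 else 0) (by omega)
    have hkis : lam k ≤ lam (i - s) := hlamk (i - s) (by omega) (by omega)
    have z1 : ∑ j ∈ Finset.Ioc 0 s, (if lam (i - s) < α j then 1 else 0) = 0 := by
      refine Finset.sum_eq_zero (fun j hj => ?_)
      rw [Finset.mem_Ioc] at hj
      exact if_neg (by have := hα1 j hj.1 hj.2; omega)
    have z2 : ∑ j ∈ Finset.Ioc s ((N + k) - k), (if lam (i - s) < α j then 1 else 0) = 0 := by
      refine Finset.sum_eq_zero (fun j hj => ?_)
      rw [Finset.mem_Ioc] at hj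
      exact if_neg (by have := hα2 j hj.1 (by omega); omega)
    -- equal part
    have e2 : ∑ j ∈ Finset.Ioc 0 i, (if β j = lam (i - s) then 1 else 0)
        = ∑ j ∈ Finset.Ioc 0 s, (if α j = lam (i - s) then 1 else 0)
          + ∑ j ∈ Finset.Ioc 0 (i - s), (if lam j = lam (i - s) then 1 else 0) := by
      rw [← Finset.sum_Ioc_consecutive _ (Nat.zero_le s) (show s ≤ i by omega)]
      congr 1
      · refine Finset.sum_congr rfl (fun j hj => ?_)
        rw [Finset.mem_Ioc] at hj
        rw [hβ1 j hj.2]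
      · have h1 : Finset.Ioc s i = Finset.Ioc (0 + s) ((i - s) + s) := by
          congr 1 <;> omega
        rw [h1, sum_Ioc_shift]
        refine Finset.sum_congr rfl (fun j hj => ?_)
        rw [Finset.mem_Ioc] at hj
        rw [hβ2 j hj.1 (by omega)]
    have z3 : ∑ j ∈ Finset.Ioc 0 s, (if α j = lam (i - s) then 1 else 0) = 0 := by
      refine Finset.sum_eq_zero (fun j hj => ?_)
      rw [Finset.mem_Ioc] at hj
      exact if_neg (by have := hα1 j hj.1 hj.2; omega)
    -- the key count over lam
    have key : ∑ j ∈ Finset.Ioc 0 k, (if lam (i - s) < lam j then 1 else 0)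
          + ∑ j ∈ Finset.Ioc 0 (i - s), (if lam j = lam (i - s) then 1 else 0) = i - s := by
      rw [← Finset.sum_Ioc_consecutive (fun j => if lam (i - s) < lam j then 1 else 0)
        (Nat.zero_le (i - s)) (show i - s ≤ k by omega)]
      have z4 : ∑ j ∈ Finset.Ioc (i - s) k, (if lam (i - s) < lam j then 1 else 0) = 0 := by
        refine Finset.sum_eq_zero (fun j hj => ?_)
        rw [Finset.mem_Ioc] at hj
        exact if_neg (by have := anti (i - s) j (by omega) (by omega) hj.2; omega)
      rw [z4, add_zero, ← Finset.sum_add_distrib]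
      refine sum_ones_Ioc (i - s) _ (fun j hj => ?_)
      rw [Finset.mem_Ioc] at hj
      have := anti j (i - s) hj.1 hj.2 (by omega)
      split_ifs <;> omega
    omega
  · -- Case 3 : s + k < i ≤ N + k
    intro i hi1 his
    have hik : s < i - k := by omega
    have hβi : β i = α (i - k) := by
      have h := hβ3 (i - k) hik
      rw [show (i - k) + k = i by omega] at h
      exact h
    rw [rankF_eq, rankF_eq]
    simp only [hβi]
    have e1 : ∑ j ∈ Finset.Ioc 0 (N + k), (if α (i - k) < β j then 1 else 0)
        = (∑ j ∈ Finset.Ioc 0 s, (if α (i - k) < α j then 1 else 0)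
            + ∑ j ∈ Finset.Ioc 0 k, (if α (i - k) < lam j then 1 else 0))
          + ∑ j ∈ Finset.Ioc s ((N + k) - k), (if α (i - k) < α j then 1 else 0) :=
      hsum (N + k) (fun x => if α (i - k) < x then 1 else 0) (by omega)
    have e2 : ∑ j ∈ Finset.Ioc 0 i, (if β j = α (i - k) then 1 else 0)
        = (∑ j ∈ Finset.Ioc 0 s, (if α j = α (i - k) then 1 else 0)
            + ∑ j ∈ Finset.Ioc 0 k, (if lam j = α (i - k) then 1 else 0))
          + ∑ j ∈ Finset.Ioc s (i - k), (if α j = α (i - k) then 1 else 0) :=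
      hsum i (fun x => if x = α (i - k) then 1 else 0) (by omega)
    have hv : α (i - k) ≤ lam k := hα2 (i - k) hik (by omega)
    have key : ∑ j ∈ Finset.Ioc 0 k, (if α (i - k) < lam j then 1 else 0)
          + ∑ j ∈ Finset.Ioc 0 k, (if lam j = α (i - k) then 1 else 0) = k := by
      rw [← Finset.sum_add_distrib]
      refine sum_ones_Ioc k _ (fun j hj => ?_)
      rw [Finset.mem_Ioc] at hj
      have := hlamk j hj.1 hj.2
      split_ifs <;> omega
    have e4 : ∑ j ∈ Finset.Ioc 0 s, (if α (i - k) < α j then 1 else 0)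
          + ∑ j ∈ Finset.Ioc s N, (if α (i - k) < α j then 1 else 0)
        = ∑ j ∈ Finset.Ioc 0 N, (if α (i - k) < α j then 1 else 0) :=
      Finset.sum_Ioc_consecutive _ (Nat.zero_le s) hsN
    have e5 : ∑ j ∈ Finset.Ioc 0 s, (if α j = α (i - k) then 1 else 0)
          + ∑ j ∈ Finset.Ioc s (i - k), (if α j = α (i - k) then 1 else 0)
        = ∑ j ∈ Finset.Ioc 0 (i - k), (if α j = α (i - k) then 1 else 0) :=
      Finset.sum_Ioc_consecutive _ (Nat.zero_le s) (by omega)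
    have hNk : (N + k) - k = N := by omega
    rw [hNk] at e1
    omega
end

section
/- Let α, β ∈ ℕ₀^N be compositions with α dominating β (α ⊳ β, meaning |α| = |β| and either the sorted partition α⁺ strictly dominates β⁺, or α⁺ = β⁺ and α strictly dominates β in the dominance partial order). If insertion at position s of a value n with β, α in the index set I_{s,n} = {γ : γ_i < n for i ≤ s, γ_i ≤ n for i > s}, then ι(s,(n))α ⊳ ι(s,(n))β, where ι(s,(n)) inserts n after position s. -/
/-- Partial sum `Σ_{i=1}^{j} α_i`. -/
def psumF (α : ℕ → ℕ) (j : ℕ) : ℕ := ∑ i ∈ Finset.Icc 1 j, α i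

/-- The decreasing rearrangement `α⁺` of the composition `(α_1,…,α_N)`, as a
function `ℕ → ℕ` (1-based; zero beyond position `N`). -/
def plusC (N : ℕ) (α : ℕ → ℕ) : ℕ → ℕ := fun i =>
  ((((Multiset.range N).map (fun j => α (j + 1))).sort (· ≤ ·)).reverse).getD (i - 1) 0

/-- Strict dominance order `α ≻ β` on compositions in `ℕ₀^N`:
`α ≠ β` and every partial sum of `α` dominates that of `β`. -/
def sdomF (N : ℕ) (α β : ℕ → ℕ) : Prop :=
  (∃ i, 1 ≤ i ∧ i ≤ N ∧ α i ≠ β i) ∧ ∀ j, j ≤ N → psumF β j ≤ psumF α j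

/-- The order `α ⊳ β`: `|α| = |β|` and either `α⁺ ≻ β⁺`, or `α⁺ = β⁺` and `α ≻ β`. -/
def tltF (N : ℕ) (α β : ℕ → ℕ) : Prop :=
  psumF α N = psumF β N ∧
    (sdomF N (plusC N α) (plusC N β) ∨
      ((∀ i, 1 ≤ i → i ≤ N → plusC N α i = plusC N β i) ∧ sdomF N α β))

/-- The order `α ⊵ β`: `α ⊳ β` or `α = β` (as compositions in `ℕ₀^N`). -/
def tleF (N : ℕ) (α β : ℕ → ℕ) : Prop :=
  (∀ i, 1 ≤ i → i ≤ N → α i = β i) ∨ tltF N α β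

lemma psumF_zero (α : ℕ → ℕ) : psumF α 0 = 0 := by simp [psumF]

lemma psumF_succ (α : ℕ → ℕ) (j : ℕ) : psumF α (j+1) = psumF α j + α (j+1) :=
  Finset.sum_Icc_succ_top (by omega) α

lemma psumF_pred_add (g : ℕ → ℕ) (j : ℕ) (hj : 1 ≤ j) :
    psumF g j = psumF g (j-1) + g j := by
  cases j with
  | zero => omega
  | succ k => simpa using psumF_succ g k

lemma psumF_congr (α β : ℕ → ℕ) (j : ℕ) (h : ∀ i, 1 ≤ i → i ≤ j → α i = β i) :
    psumF α j = psumF β j :=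
  Finset.sum_congr rfl fun i hi =>
    h i (Finset.mem_Icc.mp hi).1 (Finset.mem_Icc.mp hi).2

lemma psumF_shift (f g : ℕ → ℕ) (c : ℕ) (hf1 : f 1 = c)
    (hf : ∀ i, 2 ≤ i → f i = g (i-1)) :
    ∀ j, 1 ≤ j → psumF f j = c + psumF g (j-1) := by
  intro j hj
  induction j, hj using Nat.le_induction with
  | base => simp [psumF, hf1]
  | succ j hj ih =>
    rw [psumF_succ, ih, hf (j+1) (by omega)]
    have h1 : j + 1 - 1 = j := by omega
    rw [h1, psumF_pred_add g j hj]
    ring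

lemma sort_cons_max (M : Multiset ℕ) (n : ℕ) (h : ∀ x ∈ M, x ≤ n) :
    (n ::ₘ M).sort (· ≤ ·) = M.sort (· ≤ ·) ++ [n] := by
  refine (fun p h2 => List.Perm.eq_of_pairwise' (Multiset.pairwise_sort _ _) h2 p) ?_ ?_
  · rw [← Multiset.coe_eq_coe]
    rw [← Multiset.coe_add]
    simp [Multiset.sort_eq]
    rw [add_comm, ← Multiset.singleton_add]
  · rw [List.pairwise_append]
    refine ⟨Multiset.pairwise_sort _ _, List.pairwise_singleton _ n, fun a ha b hb => ?_⟩
    simp only [List.mem_singleton] at hb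
    subst hb
    exact h a ((Multiset.mem_sort _).1 ha)

lemma range_map_insert (s n : ℕ) (α ια : ℕ → ℕ)
    (hια : ∀ i, ια i = if i ≤ s then α i else if i = s + 1 then n else α (i - 1)) :
    ∀ m, s ≤ m →
      (Multiset.range (m+1)).map (fun j => ια (j+1)) =
        n ::ₘ (Multiset.range m).map (fun j => α (j+1)) := by
  intro m hm
  induction m, hm using Nat.le_induction with
  | base =>
    rw [Multiset.range_succ, Multiset.map_cons]
    congr 1
    · rw [hια]; simp
    · refine Multiset.map_congr rfl fun j hj => ?_
      rw [Multiset.mem_range] at hj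
      have : j + 1 ≤ s := by omega
      rw [hια]; simp [this]
  | succ m hm ih =>
    rw [Multiset.range_succ, Multiset.map_cons, ih, Multiset.range_succ, Multiset.map_cons,
      Multiset.cons_swap]
    congr 2
    have h1 : ¬ (m+1+1 ≤ s) := by omega
    have h2 : m+1+1 ≠ s+1 := by omega
    rw [hια]; simp [h1, h2, show m + 1 ≠ s by omega]

lemma plusC_insert (N s n : ℕ) (α ια : ℕ → ℕ) (hsN : s ≤ N)
    (hbound : ∀ i, 1 ≤ i → i ≤ N → α i ≤ n)
    (hια : ∀ i, ια i = if i ≤ s then α i else if i = s + 1 then n else α (i - 1)) :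
    plusC (N+1) ια 1 = n ∧ ∀ i, 2 ≤ i → plusC (N+1) ια i = plusC N α (i-1) := by
  have hm := range_map_insert s n α ια hια N hsN
  have hall : ∀ x ∈ (Multiset.range N).map (fun j => α (j+1)), x ≤ n := by
    intro x hx
    rw [Multiset.mem_map] at hx
    obtain ⟨j, hj, rfl⟩ := hx
    rw [Multiset.mem_range] at hj
    exact hbound _ (by omega) (by omega)
  have hsort := sort_cons_max _ n hall
  constructor
  · unfold plusC
    rw [hm, hsort, List.reverse_append]
    simp
  · intro i hi
    unfold plusC
    rw [hm, hsort, List.reverse_append]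
    simp only [List.reverse_singleton, List.singleton_append]
    have h1 : i - 1 = (i - 2) + 1 := by omega
    rw [h1, List.getD_cons_succ]
    simp

/-- insertion of the value `n` after position `s` preserves the order `⊳`
on compositions lying in the index set `I_{s,n}`. -/
theorem insertion_preserves_tlt
    (N s n : ℕ) (α β ια ιβ : ℕ → ℕ)
    (hs1 : 1 ≤ s) (hsN : s ≤ N)
    (hαI1 : ∀ i, 1 ≤ i → i ≤ s → α i < n)
    (hαI2 : ∀ i, s < i → i ≤ N → α i ≤ n)
    (hβI1 : ∀ i, 1 ≤ i → i ≤ s → β i < n)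
    (hβI2 : ∀ i, s < i → i ≤ N → β i ≤ n)
    (hια : ∀ i, ια i = if i ≤ s then α i else if i = s + 1 then n else α (i - 1))
    (hιβ : ∀ i, ιβ i = if i ≤ s then β i else if i = s + 1 then n else β (i - 1))
    (hdom : tltF N α β) :
    tltF (N + 1) ια ιβ := by
  obtain ⟨hsum, hcase⟩ := hdom
  have hαb : ∀ i, 1 ≤ i → i ≤ N → α i ≤ n := by
    intro i h1 h2
    by_cases h : i ≤ s
    · exact le_of_lt (hαI1 i h1 h)
    · exact hαI2 i (by omega) h2
  have hβb : ∀ i, 1 ≤ i → i ≤ N → β i ≤ n := by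
    intro i h1 h2
    by_cases h : i ≤ s
    · exact le_of_lt (hβI1 i h1 h)
    · exact hβI2 i (by omega) h2
  have hpα := plusC_insert N s n α ια hsN hαb hια
  have hpβ := plusC_insert N s n β ιβ hsN hβb hιβ
  have hψα : ∀ j, j ≤ s → psumF ια j = psumF α j := by
    intro j hj
    refine psumF_congr _ _ _ fun i h1 h2 => ?_
    rw [hια]
    simp [show i ≤ s by omega]
  have hψβ : ∀ j, j ≤ s → psumF ιβ j = psumF β j := by
    intro j hj
    refine psumF_congr _ _ _ fun i h1 h2 => ?_
    rw [hιβ]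
    simp [show i ≤ s by omega]
  have hψα2 : ∀ j, s+1 ≤ j → psumF ια j = psumF α (j-1) + n := by
    intro j hj
    induction j, hj using Nat.le_induction with
    | base =>
      rw [psumF_succ, hψα s le_rfl, hια]
      simp
    | succ j hj ih =>
      rw [psumF_succ, ih, hια]
      have h1 : ¬ (j+1 ≤ s) := by omega
      have h2 : j+1 ≠ s+1 := by omega
      simp only [h1, h2, if_false, if_neg]
      have h3 : j + 1 - 1 = j := by omega
      rw [h3, psumF_pred_add α j (by omega)]
      ring
  have hψβ2 : ∀ j, s+1 ≤ j → psumF ιβ j = psumF β (j-1) + n := by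
    intro j hj
    induction j, hj using Nat.le_induction with
    | base =>
      rw [psumF_succ, hψβ s le_rfl, hιβ]
      simp
    | succ j hj ih =>
      rw [psumF_succ, ih, hιβ]
      have h1 : ¬ (j+1 ≤ s) := by omega
      have h2 : j+1 ≠ s+1 := by omega
      simp only [h1, h2, if_false, if_neg]
      have h3 : j + 1 - 1 = j := by omega
      rw [h3, psumF_pred_add β j (by omega)]
      ring
  refine ⟨?_, ?_⟩
  · rw [hψα2 (N+1) (by omega), hψβ2 (N+1) (by omega)]
    simp [hsum]
  · rcases hcase with ⟨⟨i, hi1, hiN, hne⟩, hps⟩ | ⟨heq, ⟨i, hi1, hiN, hne⟩, hps⟩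
    · left
      refine ⟨⟨i+1, by omega, by omega, ?_⟩, ?_⟩
      · rw [hpα.2 (i+1) (by omega), hpβ.2 (i+1) (by omega)]
        simpa using hne
      · intro j hj
        rcases Nat.eq_zero_or_pos j with rfl | hj1
        · simp [psumF_zero]
        · rw [psumF_shift (plusC (N+1) ια) (plusC N α) n hpα.1 (fun i hi => hpα.2 i hi) j hj1,
              psumF_shift (plusC (N+1) ιβ) (plusC N β) n hpβ.1 (fun i hi => hpβ.2 i hi) j hj1]
          exact Nat.add_le_add_left (hps (j-1) (by omega)) n
    · right
      refine ⟨?_, ⟨?_, ?_⟩⟩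
      · intro i hi1 hi2
        rcases Nat.lt_or_ge i 2 with h | h
        · have hieq : i = 1 := by omega
          subst hieq
          rw [hpα.1, hpβ.1]
        · rw [hpα.2 i h, hpβ.2 i h]
          exact heq (i-1) (by omega) (by omega)
      · by_cases h : i ≤ s
        · exact ⟨i, by omega, by omega, by rw [hια, hιβ]; simpa [h] using hne⟩
        · refine ⟨i+1, by omega, by omega, ?_⟩
          rw [hια, hιβ]
          have h1 : ¬(i+1 ≤ s) := by omega
          have h2 : i+1 ≠ s+1 := by omega
          simp only [h1, h2, if_false, if_neg]
          simpa using hne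
      · intro j hj
        by_cases h : j ≤ s
        · rw [hψα j h, hψβ j h]
          exact hps j (by omega)
        · rw [hψα2 j (by omega), hψβ2 j (by omega)]
          exact Nat.add_le_add_right (hps (j-1) (by omega)) n
end

section
/- For a composition α ∈ ℕ₀^N with hook-length product h(α,t) = ∏_{i=1}^{ℓ(α)} ∏_{j=1}^{α_i} (α_i - j + t + κ·L(α;i,j)) in ℚ(κ)[t], where L(α;i,j) = #{l : l > i, j ≤ α_l ≤ α_i} + #{l : l < i, j ≤ α_l + 1 ≤ α_i}, and for σ = (i,i+1) an adjacent transposition with α_i > α_{i+1}, one has h(σα,t)/h(α,t) = (κ(r(α,i+1) − r(α,i)) + t + α_i − α_{i+1} − 1) / (κ(r(α,i+1) − r(α,i) − 1) + t + α_i − α_{i+1} − 1). -/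
/-- The leg-length `L(α;i,j) = #{l > i : j ≤ α_l ≤ α_i} + #{l < i : j ≤ α_l + 1 ≤ α_i}`. -/
def legF (N : ℕ) (α : ℕ → ℕ) (i j : ℕ) : ℕ :=
  ((Finset.Icc 1 N).filter (fun l => i < l ∧ j ≤ α l ∧ α l ≤ α i)).card +
  ((Finset.Icc 1 N).filter (fun l => l < i ∧ j ≤ α l + 1 ∧ α l + 1 ≤ α i)).card

/-- The ring `ℚ[κ,t]`, with `κ = X 0` and `t = X 1`. -/
abbrev RKT : Type := MvPolynomial (Fin 2) ℚ

/-- `κ` as an element of `ℚ[κ,t]`. -/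
noncomputable def kap : RKT := MvPolynomial.X 0

/-- `t` as an element of `ℚ[κ,t]`. -/
noncomputable def tvar : RKT := MvPolynomial.X 1

/-- The hook-length product
`h(α,t) = ∏_{i=1}^{ℓ(α)} ∏_{j=1}^{α_i} (α_i − j + t + κ·L(α;i,j))` in `ℚ[κ,t]`
(the factors with `α_i = 0` contribute empty products, so the outer product
may be taken over `1 ≤ i ≤ N`). -/
noncomputable def hookP (N : ℕ) (α : ℕ → ℕ) : RKT :=
  ∏ i ∈ Finset.Icc 1 N, ∏ j ∈ Finset.Icc 1 (α i),
    (((α i - j : ℕ) : RKT) + tvar + (legF N α i j : RKT) * kap)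

lemma legF_eq_sum (N : ℕ) (α : ℕ → ℕ) (i j : ℕ) :
    legF N α i j = ∑ l ∈ Finset.Icc 1 N,
      ((if i < l ∧ j ≤ α l ∧ α l ≤ α i then 1 else 0) +
       (if l < i ∧ j ≤ α l + 1 ∧ α l + 1 ≤ α i then 1 else 0)) := by
  rw [legF, Finset.card_filter, Finset.card_filter, ← Finset.sum_add_distrib]

lemma sum_swap_pair {i : ℕ} {s : Finset ℕ} (hi : i ∈ s) (hi1 : i + 1 ∈ s)
    (f g : ℕ → ℕ)
    (hfi : f i = g (i + 1)) (hfi1 : f (i + 1) = g i)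
    (h3 : ∀ l ∈ s, l ≠ i → l ≠ i + 1 → f l = g l) :
    ∑ l ∈ s, f l = ∑ l ∈ s, g l := by
  have hne : i + 1 ≠ i := by omega
  have hi1' : i + 1 ∈ s.erase i := Finset.mem_erase.mpr ⟨hne, hi1⟩
  rw [← Finset.add_sum_erase _ f hi, ← Finset.add_sum_erase _ f hi1',
      ← Finset.add_sum_erase _ g hi, ← Finset.add_sum_erase _ g hi1']
  have htail : ∑ l ∈ (s.erase i).erase (i + 1), f l
      = ∑ l ∈ (s.erase i).erase (i + 1), g l := by
    refine Finset.sum_congr rfl ?_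
    intro l hl
    simp only [Finset.mem_erase] at hl
    exact h3 l hl.2.2 hl.2.1 hl.1
  rw [htail, hfi, hfi1]; ring

set_option maxHeartbeats 2000000

/-- for an adjacent transposition `σ = (i,i+1)` with `α_i > α_{i+1}`,
`h(σα,t)/h(α,t) = (κ(r(α,i+1)−r(α,i)) + t + α_i−α_{i+1}−1)
                 /(κ(r(α,i+1)−r(α,i)−1) + t + α_i−α_{i+1}−1)`,
stated in cross-multiplied form in `ℚ[κ,t]`. -/
theorem hook_ratio_adjacent_transposition
    (N i : ℕ) (α σα : ℕ → ℕ)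
    (h1 : 1 ≤ i) (h2 : i + 1 ≤ N) (hgt : α (i + 1) < α i)
    (hσ : ∀ l, σα l = if l = i then α (i + 1) else if l = i + 1 then α i else α l) :
    hookP N σα *
      ((((rankF N α (i + 1) : ℤ) - (rankF N α i : ℤ) - 1 : ℤ) : RKT) * kap + tvar +
        ((α i - α (i + 1) - 1 : ℕ) : RKT)) =
    hookP N α *
      ((((rankF N α (i + 1) : ℤ) - (rankF N α i : ℤ) : ℤ) : RKT) * kap + tvar +
        ((α i - α (i + 1) - 1 : ℕ) : RKT)) := by
  have hne1 : ¬ (i + 1 = i) := by omega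
  have hv0 : σα i = α (i + 1) := by rw [hσ]; simp
  have hv1 : σα (i + 1) = α i := by rw [hσ]; simp [hne1]
  have hvo : ∀ l, l ≠ i → l ≠ i + 1 → σα l = α l := by
    intro l hl hl'; rw [hσ]; simp [hl, hl']
  have hiN : i ∈ Finset.Icc 1 N := by simp only [Finset.mem_Icc]; omega
  have hi1N : i + 1 ∈ Finset.Icc 1 N := by simp only [Finset.mem_Icc]; omega
  have hi1E : i + 1 ∈ (Finset.Icc 1 N).erase i :=
    Finset.mem_erase.mpr ⟨by omega, hi1N⟩
  -- leg equality for rows other than i, i+1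
  have hlegE : ∀ l, l ≠ i → l ≠ i + 1 → ∀ j, legF N σα l j = legF N α l j := by
    intro l hli hli1 j
    rw [legF_eq_sum, legF_eq_sum]
    refine sum_swap_pair hiN hi1N _ _ ?_ ?_ ?_
    · simp only [hv0, hvo l hli hli1]
      split_ifs <;> omega
    · simp only [hv1, hvo l hli hli1]
      split_ifs <;> omega
    · intro l' _ h h'
      simp only [hvo l hli hli1, hvo l' h h']
  -- row i of σα equals row i+1 of α
  have leg2 : ∀ j, legF N σα i j = legF N α (i + 1) j := by
    intro j
    rw [legF_eq_sum, legF_eq_sum]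
    refine Finset.sum_congr rfl ?_
    intro l hl
    simp only [Finset.mem_Icc] at hl
    by_cases e1 : l = i
    · subst e1; simp only [hv0, hv1]; split_ifs <;> omega
    by_cases e2 : l = i + 1
    · subst e2; simp only [hv0, hv1]; split_ifs <;> omega
    simp only [hv0, hv1, hvo l e1 e2]; split_ifs <;> omega
  -- row i+1 of σα vs row i of α
  have leg3 : ∀ j, legF N σα (i + 1) j + (if j ≤ α (i + 1) then 1 else 0)
      = legF N α i j + (if j ≤ α (i + 1) + 1 then 1 else 0) := by
    intro j
    rw [legF_eq_sum, legF_eq_sum]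
    have hA : (if j ≤ α (i + 1) then (1:ℕ) else 0)
        = ∑ l ∈ Finset.Icc 1 N, (if l = i + 1 then (if j ≤ α (i + 1) then 1 else 0) else 0) := by
      rw [Finset.sum_ite_eq', if_pos hi1N]
    have hB : (if j ≤ α (i + 1) + 1 then (1:ℕ) else 0)
        = ∑ l ∈ Finset.Icc 1 N, (if l = i then (if j ≤ α (i + 1) + 1 then 1 else 0) else 0) := by
      rw [Finset.sum_ite_eq', if_pos hiN]
    rw [hA, hB, ← Finset.sum_add_distrib, ← Finset.sum_add_distrib]
    refine Finset.sum_congr rfl ?_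
    intro l hl
    simp only [Finset.mem_Icc] at hl
    by_cases e1 : l = i
    · subst e1; simp only [hv0, hv1]; split_ifs <;> omega
    by_cases e2 : l = i + 1
    · subst e2; simp only [hv0, hv1]; split_ifs <;> omega
    simp only [hv0, hv1, hvo l e1 e2]; split_ifs <;> omega
  -- the rank identity
  have hrank : rankF N α (i + 1) = rankF N α i + legF N α i (α (i + 1) + 1) + 1 := by
    have e1 : (Finset.Icc 1 (i + 1)).filter (fun j => α j = α (i + 1))
        = (Finset.Icc 1 N).filter (fun j => j ≤ i + 1 ∧ α j = α (i + 1)) := by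
      ext x; simp only [Finset.mem_filter, Finset.mem_Icc]
      constructor <;> intro hx <;> [exact ⟨⟨hx.1.1, by omega⟩, by omega, hx.2⟩;
        exact ⟨⟨hx.1.1, hx.2.1⟩, hx.2.2⟩]
    have e2 : (Finset.Icc 1 i).filter (fun j => α j = α i)
        = (Finset.Icc 1 N).filter (fun j => j ≤ i ∧ α j = α i) := by
      ext x; simp only [Finset.mem_filter, Finset.mem_Icc]
      constructor <;> intro hx <;> [exact ⟨⟨hx.1.1, by omega⟩, by omega, hx.2⟩;
        exact ⟨⟨hx.1.1, hx.2.1⟩, hx.2.2⟩]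
    have hone : ∑ l ∈ Finset.Icc 1 N, (if l = i + 1 then (1:ℕ) else 0) = 1 := by
      rw [Finset.sum_ite_eq', if_pos hi1N]
    have hL : rankF N α (i + 1) = ∑ l ∈ Finset.Icc 1 N,
        ((if α (i + 1) < α l then 1 else 0) + (if l ≤ i + 1 ∧ α l = α (i + 1) then 1 else 0)) := by
      rw [rankF, e1, Finset.card_filter, Finset.card_filter, ← Finset.sum_add_distrib]
    have hR : rankF N α i + legF N α i (α (i + 1) + 1) + 1 = ∑ l ∈ Finset.Icc 1 N,
        ((if α i < α l then 1 else 0) + (if l ≤ i ∧ α l = α i then 1 else 0) +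
         ((if i < l ∧ α (i + 1) + 1 ≤ α l ∧ α l ≤ α i then 1 else 0) +
          (if l < i ∧ α (i + 1) + 1 ≤ α l + 1 ∧ α l + 1 ≤ α i then 1 else 0)) +
         (if l = i + 1 then 1 else 0)) := by
      rw [rankF, e2, legF, Finset.card_filter, Finset.card_filter, Finset.card_filter,
        Finset.card_filter, Finset.sum_add_distrib, Finset.sum_add_distrib,
        Finset.sum_add_distrib, Finset.sum_add_distrib, hone]
    rw [hL, hR]
    refine Finset.sum_congr rfl ?_
    intro l hl
    simp only [Finset.mem_Icc] at hl
    by_cases e1 : l = i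
    · subst e1; split_ifs <;> omega
    by_cases e2 : l = i + 1
    · subst e2; split_ifs <;> omega
    split_ifs <;> omega
  -- the two special leg values
  have hlegs : legF N σα (i + 1) (α (i + 1) + 1) = legF N α i (α (i + 1) + 1) + 1 := by
    have := leg3 (α (i + 1) + 1)
    split_ifs at this <;> omega
  have hlegne : ∀ j, j ≠ α (i + 1) + 1 → legF N σα (i + 1) j = legF N α i j := by
    intro j hj
    have := leg3 j
    split_ifs at this <;> omega
  -- split the hook products
  have hb1 : α (i + 1) + 1 ∈ Finset.Icc 1 (α i) := by
    simp only [Finset.mem_Icc]; omega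
  have hsplit : ∀ β : ℕ → ℕ, hookP N β =
      (∏ j ∈ Finset.Icc 1 (β i), (((β i - j : ℕ) : RKT) + tvar + (legF N β i j : RKT) * kap)) *
      ((∏ j ∈ Finset.Icc 1 (β (i+1)), (((β (i+1) - j : ℕ) : RKT) + tvar + (legF N β (i+1) j : RKT) * kap)) *
       ∏ l ∈ ((Finset.Icc 1 N).erase i).erase (i + 1),
         ∏ j ∈ Finset.Icc 1 (β l), (((β l - j : ℕ) : RKT) + tvar + (legF N β l j : RKT) * kap)) := by
    intro β
    rw [hookP, ← Finset.mul_prod_erase _ _ hiN, ← Finset.mul_prod_erase _ _ hi1E]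
  rw [hsplit σα, hsplit α]
  -- tail products agree
  have hT : (∏ l ∈ ((Finset.Icc 1 N).erase i).erase (i + 1),
        ∏ j ∈ Finset.Icc 1 (σα l), (((σα l - j : ℕ) : RKT) + tvar + (legF N σα l j : RKT) * kap))
      = ∏ l ∈ ((Finset.Icc 1 N).erase i).erase (i + 1),
        ∏ j ∈ Finset.Icc 1 (α l), (((α l - j : ℕ) : RKT) + tvar + (legF N α l j : RKT) * kap) := by
    refine Finset.prod_congr rfl ?_
    intro l hl
    simp only [Finset.mem_erase] at hl
    rw [hvo l hl.2.1 hl.1]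
    refine Finset.prod_congr rfl ?_
    intro j _
    rw [hlegE l hl.2.1 hl.1 j]
  -- row i of σα equals row i+1 of α
  have hRi : (∏ j ∈ Finset.Icc 1 (σα i), (((σα i - j : ℕ) : RKT) + tvar + (legF N σα i j : RKT) * kap))
      = ∏ j ∈ Finset.Icc 1 (α (i+1)), (((α (i+1) - j : ℕ) : RKT) + tvar + (legF N α (i+1) j : RKT) * kap) := by
    rw [hv0]
    refine Finset.prod_congr rfl ?_
    intro j _
    rw [leg2 j]
  -- row i+1 of σα : extract the special factor
  have hRi1 : (∏ j ∈ Finset.Icc 1 (σα (i+1)), (((σα (i+1) - j : ℕ) : RKT) + tvar + (legF N σα (i+1) j : RKT) * kap))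
      = (((α i - (α (i+1) + 1) : ℕ) : RKT) + tvar + (legF N σα (i+1) (α (i+1) + 1) : RKT) * kap) *
        ∏ j ∈ (Finset.Icc 1 (α i)).erase (α (i+1) + 1),
          (((α i - j : ℕ) : RKT) + tvar + (legF N α i j : RKT) * kap) := by
    rw [hv1, ← Finset.mul_prod_erase _ _ hb1]
    congr 1
    refine Finset.prod_congr rfl ?_
    intro j hj
    rw [hlegne j (Finset.mem_erase.mp hj).1]
  have hRαi : (∏ j ∈ Finset.Icc 1 (α i), (((α i - j : ℕ) : RKT) + tvar + (legF N α i j : RKT) * kap))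
      = (((α i - (α (i+1) + 1) : ℕ) : RKT) + tvar + (legF N α i (α (i+1) + 1) : RKT) * kap) *
        ∏ j ∈ (Finset.Icc 1 (α i)).erase (α (i+1) + 1),
          (((α i - j : ℕ) : RKT) + tvar + (legF N α i j : RKT) * kap) :=
    (Finset.mul_prod_erase _ _ hb1).symm
  rw [hT, hRi, hRi1, hRαi]
  -- identify the special factors with the cross-multiplied terms
  have hsub : α i - (α (i + 1) + 1) = α i - α (i + 1) - 1 := by omega
  have hfσ : (((α i - (α (i+1) + 1) : ℕ) : RKT) + tvar + (legF N σα (i+1) (α (i+1) + 1) : RKT) * kap)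
      = ((((rankF N α (i + 1) : ℤ) - (rankF N α i : ℤ) : ℤ) : RKT) * kap + tvar +
        ((α i - α (i + 1) - 1 : ℕ) : RKT)) := by
    have h3 : ((rankF N α (i + 1) : ℤ) - (rankF N α i : ℤ) : ℤ)
        = ((legF N σα (i+1) (α (i+1) + 1) : ℕ) : ℤ) := by
      rw [hlegs]; push_cast; omega
    rw [hsub, h3]
    push_cast
    ring
  have hfα : (((α i - (α (i+1) + 1) : ℕ) : RKT) + tvar + (legF N α i (α (i+1) + 1) : RKT) * kap)
      = ((((rankF N α (i + 1) : ℤ) - (rankF N α i : ℤ) - 1 : ℤ) : RKT) * kap + tvar +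
        ((α i - α (i + 1) - 1 : ℕ) : RKT)) := by
    have h3 : ((rankF N α (i + 1) : ℤ) - (rankF N α i : ℤ) - 1 : ℤ)
        = ((legF N α i (α (i+1) + 1) : ℕ) : ℤ) := by
      push_cast; omega
    rw [hsub, h3]
    push_cast
    ring
  rw [hfσ, hfα]
  ring
end

section
/- Let α ∈ ℕ₀^N with α_i > α_{i+1}. Define leg-length L(α;i,j) = #{l : l > i, j ≤ α_l ≤ α_i} + #{l : l < i, j ≤ α_l + 1 ≤ α_i} and rank r(α,i) = #{j : α_j > α_i} + #{j ≤ i : α_j = α_i}. Then r(α,i+1) − r(α,i) = 1 + L(α; i, α_{i+1}+1). -/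
/-!
The rank `r(α,i)` is the position of `i` when the indices are sorted by decreasing `α`, ties
broken by index: it counts the `j` with `α_j > α_i`, or `α_j = α_i` and `j ≤ i`. Comparing this
predicate for `i` and `i + 1` index by index, using `α_{i+1} < α_i`, every `j` counted for `i` is
counted for `i + 1`, and the extra ones are exactly `i + 1` itself and the `j` counted by the
leg-length `L(α; i, α_{i+1}+1)`.
-/

open Finset

lemma rankF_eq_card_filter (N : ℕ) (α : ℕ → ℕ) {i : ℕ} (hi : i ≤ N) :
    rankF N α i = #{j ∈ Icc 1 N | α i < α j ∨ (α j = α i ∧ j ≤ i)} := by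
  have hsmall : (Icc 1 i).filter (fun j => α j = α i) = {j ∈ Icc 1 N | α j = α i ∧ j ≤ i} := by
    ext j
    simp only [mem_filter, mem_Icc]
    omega
  rw [rankF, hsmall, filter_or, card_union_of_disjoint]
  exact disjoint_filter.2 fun j _ hlt heq => hlt.ne' heq.1

theorem rank_diff_eq_one_add_leg_general
    (N i : ℕ) (α : ℕ → ℕ) (h2 : i + 1 ≤ N) (hgt : α (i + 1) < α i) :
    rankF N α (i + 1) = rankF N α i + 1 + legF N α i (α (i + 1) + 1) := by
  have hself : #{j ∈ Icc 1 N | j = i + 1} = 1 := by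
    rw [filter_eq', if_pos (mem_Icc.2 ⟨by omega, h2⟩), card_singleton]
  nth_rw 2 [← hself] -- the summand `1`, not the one in `i + 1`
  rw [rankF_eq_card_filter N α h2, rankF_eq_card_filter N α (by omega), legF]
  simp only [card_filter]
  rw [← sum_add_distrib, ← sum_add_distrib, ← sum_add_distrib]
  refine sum_congr rfl fun j _ => ?_
  -- `omega` treats `α j`, `α i`, `α (i + 1)` as unrelated atoms, so identify them first
  obtain rfl | rfl | _ : j = i + 1 ∨ j = i ∨ (j ≠ i + 1 ∧ j ≠ i) := by omega
  all_goals split_ifs <;> omega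

/-- if `α_i > α_{i+1}` then `r(α,i+1) − r(α,i) = 1 + L(α;i,α_{i+1}+1)`. -/
theorem rank_diff_eq_one_add_leg
    (N i : ℕ) (α : ℕ → ℕ) (h1 : 1 ≤ i) (h2 : i + 1 ≤ N) (hgt : α (i + 1) < α i) :
    rankF N α (i + 1) = rankF N α i + 1 + legF N α i (α (i + 1) + 1) :=
  rank_diff_eq_one_add_leg_general N i α h2 hgt
end

section
/- Let α ∈ ℕ₀^N with k = ℓ(α). For the leg-lengths of the last row: L(α;k,1) = k − r(α,k), and for 2 ≤ j ≤ α_k, L(α;k,j) = L(α̃;1,j−1), where α̃ = (α_k − 1, α_1, …, α_{k−1}, 0, …). -/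
/-- for `α` with `k = ℓ(α)` and `α̃ = (α_k − 1, α_1, …, α_{k−1}, 0, …)`:
`L(α;k,1) = k − r(α,k)` and `L(α;k,j) = L(α̃;1,j−1)` for `2 ≤ j ≤ α_k`. -/
theorem leg_last_row
    (N k : ℕ) (α hat : ℕ → ℕ)
    (hk1 : 1 ≤ k) (hkN : k ≤ N)
    (hαk : 0 < α k) (hα0 : ∀ i, k < i → α i = 0)
    (hhat : ∀ i, hat i = if i = 1 then α k - 1 else if i ≤ k then α (i - 1) else 0) :
    legF N α k 1 + rankF N α k = k ∧
    (∀ j, 2 ≤ j → j ≤ α k → legF N α k j = legF N hat 1 (j - 1)) := by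
  constructor
  · simp only [legF, rankF]
    have hA : ((Finset.Icc 1 N).filter (fun l => k < l ∧ 1 ≤ α l ∧ α l ≤ α k)).card = 0 := by
      rw [Finset.card_eq_zero, Finset.filter_eq_empty_iff]
      intro l _ hp
      have := hα0 l hp.1
      omega
    have hB : (Finset.Icc 1 N).filter (fun l => l < k ∧ 1 ≤ α l + 1 ∧ α l + 1 ≤ α k)
        = (Finset.Icc 1 k).filter (fun l => α l < α k) := by
      ext l
      simp only [Finset.mem_filter, Finset.mem_Icc]
      constructor
      · rintro ⟨⟨h1, _⟩, hlk, _, hle⟩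
        exact ⟨⟨h1, hlk.le⟩, by omega⟩
      · rintro ⟨⟨h1, hlk⟩, hlt⟩
        have hne : l ≠ k := by rintro rfl; omega
        exact ⟨⟨h1, le_trans hlk hkN⟩, by omega, by omega, by omega⟩
    have hC : (Finset.Icc 1 N).filter (fun l => α k < α l)
        = (Finset.Icc 1 k).filter (fun l => α k < α l) := by
      ext l
      simp only [Finset.mem_filter, Finset.mem_Icc]
      constructor
      · rintro ⟨⟨h1, _⟩, hlt⟩
        refine ⟨⟨h1, ?_⟩, hlt⟩
        by_contra h
        push_neg at h
        rw [hα0 l h] at hlt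
        omega
      · rintro ⟨⟨h1, hlk⟩, hlt⟩
        exact ⟨⟨h1, le_trans hlk hkN⟩, hlt⟩
    rw [hA, hB, hC, zero_add]
    set T := Finset.Icc 1 k with hT
    have e1 : (T.filter (fun l => α l < α k)).card
        + (T.filter (fun l => ¬ α l < α k)).card = T.card :=
      Finset.card_filter_add_card_filter_not _
    have e2 : T.filter (fun l => ¬ α l < α k)
        = (T.filter (fun l => α k < α l)) ∪ (T.filter (fun l => α l = α k)) := by
      rw [← Finset.filter_or]
      apply Finset.filter_congr
      intro x _
      constructor <;> intro h <;> omega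
    have hdisj : Disjoint (T.filter (fun l => α k < α l)) (T.filter (fun l => α l = α k)) := by
      rw [Finset.disjoint_left]
      intro a ha hb
      simp only [Finset.mem_filter] at ha hb
      omega
    have e3 : (T.filter (fun l => ¬ α l < α k)).card
        = (T.filter (fun l => α k < α l)).card + (T.filter (fun l => α l = α k)).card := by
      rw [e2, Finset.card_union_of_disjoint hdisj]
    have hTcard : T.card = k := by
      rw [hT, Nat.card_Icc]
      omega
    omega
  · intro j hj2 hjαk
    simp only [legF]
    have hE1 : ((Finset.Icc 1 N).filter (fun l => k < l ∧ j ≤ α l ∧ α l ≤ α k)).card = 0 := by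
      rw [Finset.card_eq_zero, Finset.filter_eq_empty_iff]
      intro l _ hp
      have := hα0 l hp.1
      omega
    have hE2 : ((Finset.Icc 1 N).filter
        (fun l => l < 1 ∧ j - 1 ≤ hat l + 1 ∧ hat l + 1 ≤ hat 1)).card = 0 := by
      rw [Finset.card_eq_zero, Finset.filter_eq_empty_iff]
      intro l hl hp
      simp only [Finset.mem_Icc] at hl
      omega
    rw [hE1, hE2, zero_add, add_zero]
    have hhat1 : hat 1 = α k - 1 := by rw [hhat]; simp
    apply Finset.card_bij (fun l _ => l + 1)
    · intro l hl
      simp only [Finset.mem_filter, Finset.mem_Icc] at hl ⊢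
      obtain ⟨⟨h1, hN⟩, hlk, hj, hle⟩ := hl
      have hhatl : hat (l + 1) = α l := by
        rw [hhat]
        have : l + 1 ≠ 1 := by omega
        have : l + 1 ≤ k := by omega
        simp only [if_neg ‹l + 1 ≠ 1›, if_pos ‹l + 1 ≤ k›]
        congr 1
      refine ⟨⟨by omega, by omega⟩, by omega, ?_, ?_⟩
      · rw [hhatl]; omega
      · rw [hhatl, hhat1]; omega
    · intro a ha b hb hab
      omega
    · intro m hm
      simp only [Finset.mem_filter, Finset.mem_Icc] at hm
      obtain ⟨⟨h1, hN⟩, h1m, hj, hle⟩ := hm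
      have hmk : m ≤ k := by
        by_contra h
        push_neg at h
        have : hat m = 0 := by
          rw [hhat]
          have h1' : m ≠ 1 := by omega
          have h2' : ¬ m ≤ k := by omega
          simp [h1', h2']
        omega
      have hhatm : hat m = α (m - 1) := by
        rw [hhat]
        have h1' : m ≠ 1 := by omega
        simp [h1', hmk]
      rw [hhatm] at hj hle
      rw [hhat1] at hle
      refine ⟨m - 1, ?_, by omega⟩
      simp only [Finset.mem_filter, Finset.mem_Icc]
      exact ⟨⟨by omega, by omega⟩, by omega, by omega, by omega⟩
end

section
/- Let m, n, d ∈ ℕ with gcd(m,n) = 1 and n ≥ 2, and let λ = ((md)^n) be the rectangular partition with n parts all equal to md. Then the hook-length product h(λ, κ+1) = ∏_{i=1}^{n} ∏_{j=1}^{md} (iκ + j), and consequently the linear factor (nκ + m) occurs in h(λ, κ+1) with multiplicity exactly one. -/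
/-- The specialized hook-length product `h(α, κ+1)` as a polynomial in `κ`:
`h(α,κ+1) = ∏_i ∏_{j=1}^{α_i} ((L(α;i,j)+1)·κ + (α_i − j + 1))`. -/
noncomputable def hookK (N : ℕ) (α : ℕ → ℕ) : Polynomial ℚ :=
  ∏ i ∈ Finset.Icc 1 N, ∏ j ∈ Finset.Icc 1 (α i),
    (Polynomial.C ((legF N α i j : ℚ) + 1) * Polynomial.X +
      Polynomial.C ((α i - j + 1 : ℕ) : ℚ))

open Polynomial in
lemma lin_ne_zero (a b : ℚ) (ha : a ≠ 0) : C a * X + C b ≠ 0 := by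
  intro h
  have := congrArg (fun p => Polynomial.coeff p 1) h
  simp [coeff_add, coeff_C] at this
  exact ha this

open Polynomial in
lemma lin_factor (a b : ℚ) (ha : a ≠ 0) : C a * X + C b = C a * (X - C (-(b/a))) := by
  rw [mul_sub, ← C_mul, mul_neg, mul_div_cancel₀ b ha, map_neg, sub_neg_eq_add]

/-- for the rectangular partition `λ = ((md)^n)` with `gcd(m,n)=1`,
`h(λ,κ+1) = ∏_{i=1}^{n} ∏_{j=1}^{md} (iκ + j)`, and the linear factor `nκ + m`
occurs with multiplicity exactly one (equivalently, `−m/n` is a root of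
multiplicity one). -/
theorem hook_rectangle
    (m n d : ℕ) (hm : 1 ≤ m) (hn : 2 ≤ n) (hd : 1 ≤ d)
    (hgcd : Nat.gcd m n = 1)
    (lam : ℕ → ℕ) (hlam : ∀ i, lam i = if 1 ≤ i ∧ i ≤ n then m * d else 0) :
    hookK n lam =
      (∏ i ∈ Finset.Icc 1 n, ∏ j ∈ Finset.Icc 1 (m * d),
        (Polynomial.C (i : ℚ) * Polynomial.X + Polynomial.C (j : ℚ))) ∧
    (hookK n lam).rootMultiplicity (-(m : ℚ) / n) = 1 := by
  classical
  have hval : ∀ l, 1 ≤ l → l ≤ n → lam l = m * d := by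
    intro l h1 h2; rw [hlam]; simp [h1, h2]
  have hmd : 1 ≤ m * d := Nat.one_le_iff_ne_zero.mpr (by positivity)
  have hleg : ∀ i ∈ Finset.Icc 1 n, ∀ j ∈ Finset.Icc 1 (m * d),
      legF n lam i j = n - i := by
    intro i hi j hj
    simp only [Finset.mem_Icc] at hi hj
    unfold legF
    have h1 : ((Finset.Icc 1 n).filter (fun l => i < l ∧ j ≤ lam l ∧ lam l ≤ lam i))
        = Finset.Icc (i+1) n := by
      ext l
      simp only [Finset.mem_filter, Finset.mem_Icc]
      constructor
      · rintro ⟨⟨h1l, hln⟩, hil, -⟩; omega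
      · rintro ⟨h1, h2⟩
        have hl1 : 1 ≤ l := by omega
        refine ⟨⟨hl1, h2⟩, by omega, ?_, ?_⟩
        · rw [hval l hl1 h2]; exact hj.2
        · rw [hval l hl1 h2, hval i hi.1 hi.2]
    have h2 : ((Finset.Icc 1 n).filter (fun l => l < i ∧ j ≤ lam l + 1 ∧ lam l + 1 ≤ lam i))
        = ∅ := by
      ext l
      simp only [Finset.mem_filter, Finset.mem_Icc, Finset.notMem_empty, iff_false]
      rintro ⟨⟨h1l, hln⟩, hli, -, hle⟩
      rw [hval l h1l hln, hval i hi.1 hi.2] at hle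
      omega
    rw [h1, h2, Nat.card_Icc]
    simp only [Finset.card_empty, add_zero]
    omega
  -- rewrite hookK as product over pairs
  have step1 : hookK n lam =
      ∏ p ∈ Finset.Icc 1 n ×ˢ Finset.Icc 1 (m * d),
        (Polynomial.C ((n - p.1 + 1 : ℕ) : ℚ) * Polynomial.X +
          Polynomial.C ((m * d - p.2 + 1 : ℕ) : ℚ)) := by
    rw [Finset.prod_product]
    unfold hookK
    apply Finset.prod_congr rfl
    intro i hi
    rw [hval i (Finset.mem_Icc.mp hi).1 (Finset.mem_Icc.mp hi).2]
    apply Finset.prod_congr rfl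
    intro j hj
    rw [hleg i hi j hj]
    congr 2
    push_cast
    ring
  have step2 : hookK n lam =
      ∏ p ∈ Finset.Icc 1 n ×ˢ Finset.Icc 1 (m * d),
        (Polynomial.C ((p.1 : ℕ) : ℚ) * Polynomial.X + Polynomial.C ((p.2 : ℕ) : ℚ)) := by
    rw [step1]
    refine Finset.prod_bij' (fun p _ => (n + 1 - p.1, m * d + 1 - p.2))
      (fun p _ => (n + 1 - p.1, m * d + 1 - p.2)) ?_ ?_ ?_ ?_ ?_
    · rintro ⟨i, j⟩ hp
      simp only [Finset.mem_product, Finset.mem_Icc] at hp ⊢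
      omega
    · rintro ⟨i, j⟩ hp
      simp only [Finset.mem_product, Finset.mem_Icc] at hp ⊢
      omega
    · rintro ⟨i, j⟩ hp
      simp only [Finset.mem_product, Finset.mem_Icc] at hp
      simp only [Prod.mk.injEq]
      omega
    · rintro ⟨i, j⟩ hp
      simp only [Finset.mem_product, Finset.mem_Icc] at hp
      simp only [Prod.mk.injEq]
      omega
    · rintro ⟨i, j⟩ hp
      simp only [Finset.mem_product, Finset.mem_Icc] at hp
      have e1 : n - i + 1 = n + 1 - i := by omega
      have e2 : m * d - j + 1 = m * d + 1 - j := by omega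
      rw [e1, e2]
  constructor
  · rw [step2, Finset.prod_product]
  · rw [step2]
    set s := Finset.Icc 1 n ×ˢ Finset.Icc 1 (m * d) with hs
    set f : ℕ × ℕ → Polynomial ℚ :=
      fun p => Polynomial.C ((p.1 : ℕ) : ℚ) * Polynomial.X + Polynomial.C ((p.2 : ℕ) : ℚ)
      with hf
    have hfne : ∀ p ∈ s, f p ≠ 0 := by
      rintro ⟨i, j⟩ hp
      simp only [hs, Finset.mem_product, Finset.mem_Icc] at hp
      exact lin_ne_zero _ _ (by exact_mod_cast Nat.one_le_iff_ne_zero.mp hp.1.1)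
    have hprodne : s.prod f ≠ 0 := Finset.prod_ne_zero_iff.mpr hfne
    rw [← Polynomial.count_roots, Polynomial.roots_prod f s hprodne, Multiset.count_bind]
    show ∑ p ∈ s, Multiset.count (-(m : ℚ) / n) (f p).roots = 1
    have hroots : ∀ p ∈ s, Multiset.count (-(m : ℚ) / n) (f p).roots
        = if p = (n, m) then 1 else 0 := by
      rintro ⟨i, j⟩ hp
      simp only [hs, Finset.mem_product, Finset.mem_Icc] at hp
      have hi0 : (i : ℚ) ≠ 0 := by exact_mod_cast Nat.one_le_iff_ne_zero.mp hp.1.1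
      have hn0 : (n : ℚ) ≠ 0 := by positivity
      rw [hf]
      simp only
      rw [lin_factor _ _ hi0, Polynomial.roots_C_mul _ hi0, Polynomial.roots_X_sub_C,
        Multiset.count_singleton]
      congr 1
      rw [eq_iff_iff]
      constructor
      · intro h
        have : (m : ℚ) * i = j * n := by
          field_simp at h
          linarith [h]
        have hnat : m * i = j * n := by exact_mod_cast this
        have hdvd : n ∣ i := (Nat.Coprime.dvd_of_dvd_mul_left
          (Nat.coprime_comm.mp hgcd) ⟨j, by rw [hnat]; ring⟩)
        have hin : i = n := Nat.le_antisymm hp.1.2 (Nat.le_of_dvd (by omega) hdvd)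
        subst hin
        have : j = m := by
          have := hnat
          have hipos : 0 < i := hp.1.1
          exact Nat.eq_of_mul_eq_mul_right hipos (by omega)
        simp [this]
      · intro h
        obtain ⟨h1, h2⟩ := Prod.mk.injEq .. ▸ h
        subst h1; subst h2
        rw [neg_div]
    rw [Finset.sum_congr rfl hroots, Finset.sum_ite_eq' s (n, m) (fun _ => 1)]
    have : (n, m) ∈ s := by
      simp only [hs, Finset.mem_product, Finset.mem_Icc]
      exact ⟨⟨by omega, le_refl n⟩, hm, Nat.le_mul_of_pos_right m hd⟩
    simp [this]
end

section
/- Fix m, n, d ∈ ℕ with gcd(m,n) = 1, n ≥ 2, d ≥ 2. Let λ = ((md)^n) ∈ ℕ₀^M and β = (0^n, m^{nd}) ∈ ℕ₀^M with M ≥ n(d+1). Suppose γ ∈ ℕ₀^M satisfies λ ⊵ γ (i.e., |γ| = |λ| and λ⁺ ⪰ γ⁺, with λ ⪰ γ when γ⁺ = λ⁺) and the rank equations (r(γ,i) − i)·m = (λ_i − γ_i)·n for all 1 ≤ i ≤ M (with λ_i = 0 for i > n). Then γ = λ or γ = β. -/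
set_option maxHeartbeats 1600000

lemma rk_pos (N : ℕ) (α : ℕ → ℕ) (i : ℕ) (hi : 1 ≤ i) : 1 ≤ rankF N α i := by
  have h : i ∈ (Finset.Icc 1 i).filter (fun j => α j = α i) := by
    simp [Finset.mem_Icc, hi]
  have := Finset.card_pos.mpr ⟨i, h⟩
  unfold rankF; omega

lemma rk_le (N : ℕ) (α : ℕ → ℕ) (i : ℕ) (hiN : i ≤ N) : rankF N α i ≤ N := by
  classical
  unfold rankF
  set A := (Finset.Icc 1 N).filter (fun j => α i < α j) with hA
  set B := (Finset.Icc 1 i).filter (fun j => α j = α i) with hB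
  have hdisj : Disjoint A B := by
    rw [Finset.disjoint_left]
    intro x hx hx'
    simp only [hA, hB, Finset.mem_filter] at hx hx'
    omega
  have hsub : A ∪ B ⊆ Finset.Icc 1 N := by
    intro x hx
    rcases Finset.mem_union.mp hx with h | h <;>
      simp only [hA, hB, Finset.mem_filter, Finset.mem_Icc] at h <;>
      simp [Finset.mem_Icc] <;> omega
  calc A.card + B.card = (A ∪ B).card := (Finset.card_union_of_disjoint hdisj).symm
    _ ≤ (Finset.Icc 1 N).card := Finset.card_le_card hsub
    _ = N := by simp

lemma rk_lt_of_eq (N : ℕ) (α : ℕ → ℕ) {i j : ℕ} (hij : i < j) (hjN : j ≤ N)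
    (h : α i = α j) : rankF N α i < rankF N α j := by
  unfold rankF
  have h1 : (Finset.Icc 1 N).filter (fun k => α i < α k)
      = (Finset.Icc 1 N).filter (fun k => α j < α k) := by rw [h]
  have h2 : (Finset.Icc 1 i).filter (fun k => α k = α i)
      ⊂ (Finset.Icc 1 j).filter (fun k => α k = α j) := by
    constructor
    · intro x hx
      simp only [Finset.mem_filter, Finset.mem_Icc] at hx ⊢
      exact ⟨⟨hx.1.1, le_trans hx.1.2 (le_of_lt hij)⟩, hx.2.trans h⟩
    · intro hcon
      have : j ∈ (Finset.Icc 1 j).filter (fun k => α k = α j) := by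
        simp [Finset.mem_Icc]; omega
      have := hcon this
      simp only [Finset.mem_filter, Finset.mem_Icc] at this
      omega
  have h2' := Finset.card_lt_card h2
  have h1' := congrArg Finset.card h1
  omega

lemma rk_lt_of_lt (N : ℕ) (α : ℕ → ℕ) {i j : ℕ} (hi1 : 1 ≤ i) (hiN : i ≤ N)
    (hjN : j ≤ N) (h : α i < α j) : rankF N α j < rankF N α i := by
  classical
  unfold rankF
  set Aj := (Finset.Icc 1 N).filter (fun k => α j < α k) with hAj
  set Bj := (Finset.Icc 1 j).filter (fun k => α k = α j) with hBj
  set Ai := (Finset.Icc 1 N).filter (fun k => α i < α k) with hAi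
  set Bi := (Finset.Icc 1 i).filter (fun k => α k = α i) with hBi
  have hdisj : Disjoint Aj Bj := by
    rw [Finset.disjoint_left]
    intro x hx hx'
    simp only [hAj, hBj, Finset.mem_filter] at hx hx'
    omega
  have hsub : Aj ∪ Bj ⊆ Ai := by
    intro x hx
    rcases Finset.mem_union.mp hx with hx | hx <;>
      simp only [hAj, hBj, Finset.mem_filter, Finset.mem_Icc] at hx <;>
      simp only [hAi, Finset.mem_filter, Finset.mem_Icc]
    · exact ⟨hx.1, lt_trans h hx.2⟩
    · exact ⟨⟨hx.1.1, le_trans hx.1.2 hjN⟩, hx.2 ▸ h⟩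
  have hBi1 : 1 ≤ Bi.card := by
    have : i ∈ Bi := by simp [hBi, Finset.mem_Icc, hi1]
    exact Finset.card_pos.mpr ⟨i, this⟩
  calc Aj.card + Bj.card = (Aj ∪ Bj).card := (Finset.card_union_of_disjoint hdisj).symm
    _ ≤ Ai.card := Finset.card_le_card hsub
    _ < Ai.card + Bi.card := by omega

/-- for `λ = ((md)^n)` and `β = (0^n, m^{nd})` in `ℕ₀^M`
(`gcd(m,n)=1`, `n ≥ 2`, `d ≥ 2`, `M ≥ n(d+1)`), any `γ ∈ ℕ₀^M` with `λ ⊵ γ` satisfying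
the rank equations `(r(γ,i) − i)·m = (λ_i − γ_i)·n` for `1 ≤ i ≤ M` equals `λ` or `β`. -/
theorem critical_pair_unique_rectangle
    (m n d M : ℕ) (hm : 1 ≤ m) (hn : 2 ≤ n) (hd : 2 ≤ d)
    (hgcd : Nat.gcd m n = 1) (hM : n * (d + 1) ≤ M)
    (lam bet gam : ℕ → ℕ)
    (hlam : ∀ i, lam i = if 1 ≤ i ∧ i ≤ n then m * d else 0)
    (hbet : ∀ i, bet i = if n < i ∧ i ≤ n * (d + 1) then m else 0)
    (hdom : tleF M lam gam)
    (hrank : ∀ i, 1 ≤ i → i ≤ M →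
      ((rankF M gam i : ℤ) - (i : ℤ)) * m = ((lam i : ℤ) - (gam i : ℤ)) * n) :
    (∀ i, 1 ≤ i → i ≤ M → gam i = lam i) ∨ (∀ i, 1 ≤ i → i ≤ M → gam i = bet i) := by
  classical
  clear hdom
  set R : ℕ → ℕ := rankF M gam with hR
  set S : Finset ℕ := Finset.Icc 1 M with hS
  have hnM : n ≤ M := le_trans (by nlinarith) hM
  have hndM : n * d ≤ M := le_trans (by nlinarith) hM
  -- master equation over ℕ
  have hE : ∀ i, 1 ≤ i → i ≤ M → m * R i + n * gam i = m * i + n * lam i := by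
    intro i h1 h2
    have h := hrank i h1 h2
    have h' : ((m * R i + n * gam i : ℕ) : ℤ) = ((m * i + n * lam i : ℕ) : ℤ) := by
      push_cast
      nlinarith [h]
    exact_mod_cast h'
  -- lam values
  have hlam_le : ∀ i, 1 ≤ i → i ≤ n → lam i = m * d := by
    intro i h1 h2; rw [hlam]; simp [h1, h2]
  have hlam_gt : ∀ i, n < i → lam i = 0 := by
    intro i h1; rw [hlam]; simp; omega
  -- divisibility
  have hdvd : ∀ i, 1 ≤ i → i ≤ M → m ∣ gam i := by
    intro i h1 h2
    have he := hE i h1 h2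
    have hd1 : m ∣ m * i + n * lam i := by
      apply dvd_add (Dvd.intro i rfl)
      rcases le_or_gt i n with h | h
      · rw [hlam_le i h1 h]; exact ⟨n * d, by ring⟩
      · rw [hlam_gt i h]; simp
    have hd2 : m ∣ m * R i := Dvd.intro (R i) rfl
    have hd3 : m ∣ n * gam i := by
      have : n * gam i = (m * i + n * lam i) - m * R i := by omega
      rw [this]; exact Nat.dvd_sub hd1 hd2
    exact (Nat.Coprime.dvd_of_dvd_mul_left hgcd hd3)
  -- injectivity of R on S
  have hinj : ∀ i, 1 ≤ i → i ≤ M → ∀ j, 1 ≤ j → j ≤ M → R i = R j → i = j := by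
    intro i hi1 hi2 j hj1 hj2 hij
    by_contra hne
    rcases lt_trichotomy (gam i) (gam j) with h | h | h
    · have h2 := rk_lt_of_lt M gam hi1 hi2 hj2 h; rw [← hR] at h2; omega
    · rcases lt_trichotomy i j with h' | h' | h'
      · have h2 := rk_lt_of_eq M gam h' hj2 h; rw [← hR] at h2; omega
      · exact hne h'
      · have h2 := rk_lt_of_eq M gam h' hi2 h.symm; rw [← hR] at h2; omega
    · have h2 := rk_lt_of_lt M gam hj1 hj2 hi2 h; rw [← hR] at h2; omega
  have hmemS : ∀ i, i ∈ S ↔ (1 ≤ i ∧ i ≤ M) := by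
    intro i; rw [hS, Finset.mem_Icc]
  -- image of R is S
  have himg : S.image R = S := by
    apply Finset.eq_of_subset_of_card_le
    · intro x hx
      rcases Finset.mem_image.mp hx with ⟨i, hi, rfl⟩
      rw [hmemS] at hi ⊢
      exact ⟨rk_pos M gam i hi.1, rk_le M gam i hi.2⟩
    · rw [Finset.card_image_of_injOn]
      intro i hi j hj hij
      rw [Finset.mem_coe, hmemS] at hi hj
      exact hinj i hi.1 hi.2 j hj.1 hj.2 hij
  have hsurj : ∀ ρ, 1 ≤ ρ → ρ ≤ M → ∃ j, 1 ≤ j ∧ j ≤ M ∧ R j = ρ := by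
    intro ρ h1 h2
    have : ρ ∈ S.image R := by rw [himg, hmemS]; exact ⟨h1, h2⟩
    rcases Finset.mem_image.mp this with ⟨j, hj, hj'⟩
    rw [hmemS] at hj
    exact ⟨j, hj.1, hj.2, hj'⟩
  -- sum of ranks
  have hsumR : ∑ i ∈ S, R i = ∑ i ∈ S, i := by
    have h1 : ∑ x ∈ S.image R, (id : ℕ → ℕ) x = ∑ x ∈ S, id (R x) := by
      apply Finset.sum_image
      intro i hi j hj hij
      rw [Finset.mem_coe, hmemS] at hi hj
      exact hinj i hi.1 hi.2 j hj.1 hj.2 hij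
    simpa [himg] using h1.symm
  -- sum of lam
  have hsumlam : ∑ i ∈ S, lam i = n * (m * d) := by
    have h1 : ∑ i ∈ Finset.Icc 1 n, lam i = ∑ i ∈ S, lam i := by
      apply Finset.sum_subset
      · intro x hx; rw [hmemS]; rw [Finset.mem_Icc] at hx; omega
      · intro x hx hx'
        rw [Finset.mem_Icc] at hx'
        rw [hmemS] at hx
        exact hlam_gt x (by omega)
    rw [← h1]
    have h2 : ∑ i ∈ Finset.Icc 1 n, lam i = ∑ i ∈ Finset.Icc 1 n, (m * d) := by
      apply Finset.sum_congr rfl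
      intro x hx; rw [Finset.mem_Icc] at hx; exact hlam_le x hx.1 hx.2
    rw [h2, Finset.sum_const, Nat.card_Icc]
    simp [Nat.mul_comm]
  -- sum of gam
  have hsumgam : ∑ i ∈ S, gam i = m * (n * d) := by
    have h1 : ∑ i ∈ S, (m * R i + n * gam i) = ∑ i ∈ S, (m * i + n * lam i) := by
      apply Finset.sum_congr rfl
      intro x hx; rw [hmemS] at hx; exact hE x hx.1 hx.2
    rw [Finset.sum_add_distrib, Finset.sum_add_distrib, ← Finset.mul_sum, ← Finset.mul_sum,
        ← Finset.mul_sum, ← Finset.mul_sum, hsumR, hsumlam] at h1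
    have h2 : n * ∑ i ∈ S, gam i = n * (m * (n * d)) := by nlinarith
    exact Nat.eq_of_mul_eq_mul_left (by omega) h2
  -- the number of nonzero entries
  set G : ℕ := ((Finset.Icc 1 M).filter (fun k => gam k ≠ 0)).card with hG
  have hGsum : ∑ k ∈ (Finset.Icc 1 M).filter (fun k => gam k ≠ 0), gam k = m * (n * d) := by
    rw [Finset.sum_filter_ne_zero]; exact hsumgam
  have hGge : ∀ k ∈ (Finset.Icc 1 M).filter (fun k => gam k ≠ 0), m ≤ gam k := by
    intro k hk
    simp only [Finset.mem_filter, Finset.mem_Icc] at hk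
    exact Nat.le_of_dvd (by omega) (hdvd k hk.1.1 hk.1.2)
  have hGle : G ≤ n * d := by
    have h1 : G • m ≤ ∑ k ∈ (Finset.Icc 1 M).filter (fun k => gam k ≠ 0), gam k :=
      Finset.card_nsmul_le_sum _ _ _ hGge
    rw [hGsum, smul_eq_mul] at h1
    nlinarith
  -- rank formula for zero entries
  have hzrank : ∀ i, 1 ≤ i → i ≤ M → gam i = 0 →
      R i = G + ((Finset.Icc 1 i).filter (fun j => gam j = 0)).card := by
    intro i h1 h2 h0
    have e1 : (Finset.Icc 1 M).filter (fun j => gam i < gam j)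
        = (Finset.Icc 1 M).filter (fun k => gam k ≠ 0) := by
      apply Finset.filter_congr
      intro x _; rw [h0]; omega
    have e2 : (Finset.Icc 1 i).filter (fun j => gam j = gam i)
        = (Finset.Icc 1 i).filter (fun j => gam j = 0) := by
      apply Finset.filter_congr
      intro x _; rw [h0]
    rw [hR]; unfold rankF
    rw [e1, e2, hG]
  by_cases hcase : ∃ i₀, 1 ≤ i₀ ∧ i₀ ≤ n ∧ gam i₀ = 0
  · -- CASE 1 : gam = bet
    rcases hcase with ⟨i₀, h01, h0n, h00⟩
    right
    have h0M : i₀ ≤ M := le_trans h0n hnM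
    have hRi₀ : R i₀ = i₀ + n * d := by
      have he := hE i₀ h01 h0M
      rw [h00, hlam_le i₀ h01 h0n] at he
      have h2 : m * R i₀ = m * (i₀ + n * d) := by ring_nf; ring_nf at he; omega
      exact Nat.eq_of_mul_eq_mul_left (by omega) h2
    have hZle : ((Finset.Icc 1 i₀).filter (fun j => gam j = 0)).card ≤ i₀ := by
      calc ((Finset.Icc 1 i₀).filter (fun j => gam j = 0)).card
          ≤ (Finset.Icc 1 i₀).card := Finset.card_le_card (Finset.filter_subset _ _)
        _ = i₀ := by rw [Nat.card_Icc]; omega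
    have hGnd : G = n * d := by
      have h1 := hzrank i₀ h01 h0M h00
      omega
    -- every value is 0 or m
    have hvle : ∀ k, 1 ≤ k → k ≤ M → gam k ≤ m := by
      intro k hk1 hk2
      by_contra hgt
      push_neg at hgt
      have hkmem : k ∈ (Finset.Icc 1 M).filter (fun k => gam k ≠ 0) := by
        simp only [Finset.mem_filter, Finset.mem_Icc]
        exact ⟨⟨hk1, hk2⟩, by omega⟩
      have hlt : ∑ _x ∈ (Finset.Icc 1 M).filter (fun k => gam k ≠ 0), m
          < ∑ x ∈ (Finset.Icc 1 M).filter (fun k => gam k ≠ 0), gam x :=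
        Finset.sum_lt_sum hGge ⟨k, hkmem, hgt⟩
      rw [hGsum, Finset.sum_const, smul_eq_mul, ← hG, hGnd] at hlt
      nlinarith
    have hval : ∀ k, 1 ≤ k → k ≤ M → gam k = 0 ∨ gam k = m := by
      intro k hk1 hk2
      rcases Nat.eq_zero_or_pos (gam k) with h | h
      · exact Or.inl h
      · have := Nat.le_of_dvd h (hdvd k hk1 hk2)
        have := hvle k hk1 hk2
        omega
    -- (a) the first n entries vanish
    have hzn : ∀ k, 1 ≤ k → k ≤ n → gam k = 0 := by
      intro k hk1 hkn
      have hkM : k ≤ M := le_trans hkn hnM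
      rcases hval k hk1 hkM with h | h
      · exact h
      · exfalso
        have he := hE k hk1 hkM
        rw [h, hlam_le k hk1 hkn] at he
        have hemp : (Finset.Icc 1 M).filter (fun j => gam k < gam j) = ∅ := by
          apply Finset.filter_false_of_mem
          intro j hj
          rw [Finset.mem_Icc] at hj
          have := hvle j hj.1 hj.2
          omega
        have hRk : R k ≤ k := by
          rw [hR]; unfold rankF
          rw [hemp]
          simp only [Finset.card_empty, zero_add]
          calc ((Finset.Icc 1 k).filter (fun j => gam j = gam k)).card
              ≤ (Finset.Icc 1 k).card := Finset.card_le_card (Finset.filter_subset _ _)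
            _ = k := by rw [Nat.card_Icc]; omega
        have h1 : m * R k ≤ m * k := Nat.mul_le_mul_left m hRk
        have h2 : n * (m * d) ≤ n * m := by omega
        have h3 : m * d ≤ m * 1 := by
          have := Nat.le_of_mul_le_mul_left h2 (by omega : 0 < n)
          omega
        have := Nat.le_of_mul_le_mul_left h3 (by omega : 0 < m)
        omega
    -- (b1) entries in (n, n(d+1)] are m
    have hmid : ∀ k, n < k → k ≤ n * (d + 1) → gam k = m := by
      intro k hk1 hk2
      have hkM : k ≤ M := le_trans hk2 hM
      rcases hval k (by omega) hkM with h | h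
      · exfalso
        have he := hE k (by omega) hkM
        rw [h, hlam_gt k hk1] at he
        have hRk : R k = k := by
          have h2 : m * R k = m * k := by ring_nf; ring_nf at he; omega
          exact Nat.eq_of_mul_eq_mul_left (by omega) h2
        have hsub : insert k (Finset.Icc 1 n) ⊆ (Finset.Icc 1 k).filter (fun j => gam j = 0) := by
          intro x hx
          rcases Finset.mem_insert.mp hx with rfl | hx
          · simp only [Finset.mem_filter, Finset.mem_Icc]; exact ⟨⟨by omega, le_refl _⟩, h⟩
          · rw [Finset.mem_Icc] at hx
            simp only [Finset.mem_filter, Finset.mem_Icc]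
            exact ⟨⟨hx.1, by omega⟩, hzn x hx.1 hx.2⟩
        have hcard : n + 1 ≤ ((Finset.Icc 1 k).filter (fun j => gam j = 0)).card := by
          have h1 := Finset.card_le_card hsub
          rw [Finset.card_insert_of_notMem (by rw [Finset.mem_Icc]; omega)] at h1
          rw [Nat.card_Icc] at h1
          omega
        have := hzrank k (by omega) hkM h
        have hnd1 : n * (d + 1) = n * d + n := by ring
        omega
      · exact h
    -- (b2) entries beyond n(d+1) vanish
    have htail : ∀ k, n * (d + 1) < k → k ≤ M → gam k = 0 := by
      intro k hk1 hkM
      have hkn : n < k := by nlinarith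
      rcases hval k (by omega) hkM with h | h
      · exact h
      · exfalso
        have he := hE k (by omega) hkM
        rw [h, hlam_gt k hkn] at he
        have hemp : (Finset.Icc 1 M).filter (fun j => gam k < gam j) = ∅ := by
          apply Finset.filter_false_of_mem
          intro j hj
          rw [Finset.mem_Icc] at hj
          have := hvle j hj.1 hj.2
          omega
        have hsub : (Finset.Icc 1 k).filter (fun j => gam j = gam k)
            ⊆ (Finset.Icc 1 M).filter (fun j => gam j ≠ 0) := by
          intro x hx
          simp only [Finset.mem_filter, Finset.mem_Icc] at hx ⊢
          exact ⟨⟨hx.1.1, le_trans hx.1.2 hkM⟩, by omega⟩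
        have hRk : R k ≤ n * d := by
          have h1 := Finset.card_le_card hsub
          rw [hR]; unfold rankF
          rw [hemp]
          simp only [Finset.card_empty, zero_add]
          omega
        have h1 : m * R k ≤ m * (n * d) := Nat.mul_le_mul_left m hRk
        have h2 : m * k ≤ m * (n * d) + n * m := by omega
        have h3 : m * k ≤ m * (n * d + n) := by ring_nf; ring_nf at h2; omega
        have h4 : k ≤ n * d + n := Nat.le_of_mul_le_mul_left (by
          calc m * k ≤ m * (n * d + n) := h3) (by omega)
        have : n * (d + 1) = n * d + n := by ring
        omega
    intro i hi1 hiM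
    rw [hbet]
    split_ifs with h
    · exact hmid i h.1 h.2
    · push_neg at h
      rcases le_or_gt i n with h' | h'
      · exact hzn i hi1 h'
      · exact htail i (h h') hiM
  · -- CASE 2 : gam = lam
    left
    push_neg at hcase
    have hGM : G ≤ M := le_trans hGle hndM
    have hGn : n ≤ G := by
      have hsub : Finset.Icc 1 n ⊆ (Finset.Icc 1 M).filter (fun k => gam k ≠ 0) := by
        intro x hx; rw [Finset.mem_Icc] at hx
        simp only [Finset.mem_filter, Finset.mem_Icc]
        exact ⟨⟨hx.1, le_trans hx.2 hnM⟩, hcase x hx.1 hx.2⟩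
      have h1 := Finset.card_le_card hsub
      rw [Nat.card_Icc] at h1; omega
    have hzero_gt : ∀ k, 1 ≤ k → k ≤ M → gam k = 0 → G < k := by
      intro k h1 h2 h0
      have hkn : n < k := by
        by_contra hc; push_neg at hc; exact hcase k h1 hc h0
      have he := hE k h1 h2
      rw [h0, hlam_gt k hkn] at he
      have hRk : R k = k :=
        Nat.eq_of_mul_eq_mul_left (by omega : 0 < m) (by omega : m * R k = m * k)
      have hz := hzrank k h1 h2 h0
      have hpos : 1 ≤ ((Finset.Icc 1 k).filter (fun j => gam j = 0)).card := by
        apply Finset.card_pos.mpr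
        exact ⟨k, by simp only [Finset.mem_filter, Finset.mem_Icc]; exact ⟨⟨h1, le_refl _⟩, h0⟩⟩
      omega
    have hnzset : (Finset.Icc 1 M).filter (fun k => gam k ≠ 0) = Finset.Icc 1 G := by
      symm
      apply Finset.eq_of_subset_of_card_le
      · intro x hx; rw [Finset.mem_Icc] at hx
        have hxM : x ≤ M := le_trans hx.2 hGM
        simp only [Finset.mem_filter, Finset.mem_Icc]
        refine ⟨⟨hx.1, hxM⟩, fun h0 => ?_⟩
        have := hzero_gt x hx.1 hxM h0
        omega
      · rw [Nat.card_Icc]; omega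
    have hzero_of_gt : ∀ k, G < k → k ≤ M → gam k = 0 := by
      intro k h1 h2
      by_contra h0
      have hk : k ∈ Finset.Icc 1 G := by
        rw [← hnzset]
        simp only [Finset.mem_filter, Finset.mem_Icc]
        exact ⟨⟨by omega, h2⟩, h0⟩
      rw [Finset.mem_Icc] at hk; omega
    have hnz_of_le : ∀ k, 1 ≤ k → k ≤ G → gam k ≠ 0 := by
      intro k h1 h2
      have hk : k ∈ (Finset.Icc 1 M).filter (fun k => gam k ≠ 0) := by
        rw [hnzset, Finset.mem_Icc]; exact ⟨h1, h2⟩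
      simp only [Finset.mem_filter] at hk
      exact hk.2
    have hRle : ∀ k, 1 ≤ k → k ≤ G → R k ≤ G := by
      intro k h1 h2
      by_contra hc
      push_neg at hc
      have hkM : k ≤ M := le_trans h2 hGM
      have hRkM : R k ≤ M := rk_le M gam k hkM
      have h0 : gam (R k) = 0 := hzero_of_gt (R k) hc hRkM
      have hRR : R (R k) = R k := by
        have he := hE (R k) (by omega) hRkM
        rw [h0, hlam_gt (R k) (by omega)] at he
        exact Nat.eq_of_mul_eq_mul_left (by omega : 0 < m)
          (by omega : m * R (R k) = m * R k)
      have := hinj (R k) (by omega) hRkM k h1 hkM hRR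
      omega
    obtain ⟨j, hj1, hjM, hjR⟩ := hsurj G (by omega) hGM
    have hjG : j ≤ G := by
      by_contra hc
      push_neg at hc
      have h0 : gam j = 0 := hzero_of_gt j hc hjM
      have he := hE j hj1 hjM
      rw [h0, hlam_gt j (by omega)] at he
      have hRj : R j = j :=
        Nat.eq_of_mul_eq_mul_left (by omega : 0 < m) (by omega : m * R j = m * j)
      omega
    have hjn : j ≤ n := by
      by_contra hc
      push_neg at hc
      have hgj : m ≤ gam j := Nat.le_of_dvd (by
          have := hnz_of_le j hj1 hjG; omega) (hdvd j hj1 hjM)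
      have he := hE j hj1 hjM
      rw [hlam_gt j hc, hjR] at he
      have h1 : n * m ≤ n * gam j := Nat.mul_le_mul_left n hgj
      have h2 : m * (G + n) ≤ m * j := by
        have he' : (m:ℤ) * G + n * gam j = m * j + n * 0 := by exact_mod_cast he
        have h1' : (n:ℤ) * m ≤ n * gam j := by exact_mod_cast h1
        have h3 : (m:ℤ) * (G + n) ≤ m * j := by nlinarith [he', h1']
        exact_mod_cast h3
      have := Nat.le_of_mul_le_mul_left h2 (by omega : 0 < m)
      omega
    have hgj0 : gam j ≠ 0 := hcase j hj1 hjn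
    obtain ⟨w, hw⟩ := hdvd j hj1 hjM
    have hw1 : 1 ≤ w := by
      rcases Nat.eq_zero_or_pos w with h | h
      · exfalso; rw [h, Nat.mul_zero] at hw; exact hgj0 hw
      · exact h
    have hEj := hE j hj1 hjM
    rw [hlam_le j hj1 hjn, hjR, hw] at hEj
    have hwd : w ≤ d := by
      have h1 : m * j ≤ m * G := Nat.mul_le_mul_left m hjG
      have h2 : n * (m * w) ≤ n * (m * d) := by omega
      have h3 : m * w ≤ m * d := Nat.le_of_mul_le_mul_left h2 (by omega)
      exact Nat.le_of_mul_le_mul_left h3 (by omega)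
    have hGj : G + n * w = j + n * d := by
      have h1 : (m:ℤ) * (G + n * w) = m * (j + n * d) := by
        have h2 : (m:ℤ) * G + n * (m * w) = m * j + n * (m * d) := by exact_mod_cast hEj
        linear_combination h2
      exact Nat.eq_of_mul_eq_mul_left (by omega : 0 < m) (by exact_mod_cast h1)
    have hlow : ∀ k, 1 ≤ k → k ≤ j → m * w ≤ gam k := by
      intro k h1 h2
      rcases eq_or_lt_of_le h2 with rfl | h2
      · exact le_of_eq hw.symm
      · by_contra hc
        push_neg at hc
        have hkM : k ≤ M := by omega
        have h3 := rk_lt_of_lt M gam h1 hkM hjM (by rw [hw]; exact hc)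
        rw [← hR] at h3
        have h4 : R k ≤ G := hRle k h1 (by omega)
        omega
    have hhigh : ∀ k, j < k → k ≤ G → m * w + m ≤ gam k := by
      intro k h1 h2
      have hkM : k ≤ M := le_trans h2 hGM
      have hRk : R k ≤ G := hRle k (by omega) h2
      have hgt : m * w < gam k := by
        rcases lt_trichotomy (gam k) (m * w) with h | h | h
        · exfalso
          have h3 := rk_lt_of_lt M gam (by omega : 1 ≤ k) hkM hjM (by rw [hw]; exact h)
          rw [← hR] at h3
          omega
        · exfalso
          have h3 := rk_lt_of_eq M gam h1 hkM (by rw [hw, h])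
          rw [← hR] at h3
          omega
        · exact h
      have hdv : m ∣ gam k - m * w := Nat.dvd_sub (hdvd k (by omega) hkM) ⟨w, rfl⟩
      have := Nat.le_of_dvd (by omega) hdv
      omega
    have hsplit : ∑ k ∈ Finset.Icc 1 G, gam k = m * (n * d) := by
      rw [← hsumgam]
      apply Finset.sum_subset
      · intro x hx; rw [hmemS]; rw [Finset.mem_Icc] at hx
        exact ⟨hx.1, le_trans hx.2 hGM⟩
      · intro x hx hx'
        rw [hmemS] at hx; rw [Finset.mem_Icc] at hx'
        exact hzero_of_gt x (by omega) hx.2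
    have hIoc0 : Finset.Icc 1 G = Finset.Ioc 0 G := Finset.Icc_add_one_left_eq_Ioc 0 G
    have hsum_low : j * (m * w) + (G - j) * (m * w + m) ≤ m * (n * d) := by
      have hcons := Finset.sum_Ioc_consecutive gam (Nat.zero_le j) hjG
      have hA : j * (m * w) ≤ ∑ k ∈ Finset.Ioc 0 j, gam k := by
        have h1 : (Finset.Ioc 0 j).card • (m * w) ≤ ∑ k ∈ Finset.Ioc 0 j, gam k := by
          apply Finset.card_nsmul_le_sum
          intro x hx; rw [Finset.mem_Ioc] at hx
          exact hlow x hx.1 hx.2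
        rwa [Nat.card_Ioc, Nat.sub_zero, smul_eq_mul] at h1
      have hB : (G - j) * (m * w + m) ≤ ∑ k ∈ Finset.Ioc j G, gam k := by
        have h1 : (Finset.Ioc j G).card • (m * w + m) ≤ ∑ k ∈ Finset.Ioc j G, gam k := by
          apply Finset.card_nsmul_le_sum
          intro x hx; rw [Finset.mem_Ioc] at hx
          exact hhigh x hx.1 hx.2
        rwa [Nat.card_Ioc, smul_eq_mul] at h1
      have hS0 : ∑ k ∈ Finset.Ioc 0 G, gam k = m * (n * d) := by
        rw [← hIoc0]; exact hsplit
      calc j * (m * w) + (G - j) * (m * w + m)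
          ≤ (∑ k ∈ Finset.Ioc 0 j, gam k) + ∑ k ∈ Finset.Ioc j G, gam k :=
            Nat.add_le_add hA hB
        _ = ∑ k ∈ Finset.Ioc 0 G, gam k := hcons
        _ = m * (n * d) := hS0
    have hweq : w = d := by
      by_contra hne
      have hwd' : w + 1 ≤ d := by omega
      have hj' : (1:ℤ) ≤ (j:ℤ) := by exact_mod_cast hj1
      have hw' : (1:ℤ) ≤ (w:ℤ) := by exact_mod_cast hw1
      have hm' : (1:ℤ) ≤ (m:ℤ) := by exact_mod_cast hm
      have hn' : (2:ℤ) ≤ (n:ℤ) := by exact_mod_cast hn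
      have hd' : (w:ℤ) + 1 ≤ (d:ℤ) := by exact_mod_cast hwd'
      have hGj' : (G:ℤ) + n * w = j + n * d := by exact_mod_cast hGj
      have hsub' : ((G - j : ℕ) : ℤ) = (G:ℤ) - j := by
        rw [Nat.cast_sub hjG]
      have hsl : (j:ℤ) * (m * w) + ((G:ℤ) - j) * (m * w + m) ≤ m * (n * d) := by
        rw [← hsub']
        exact_mod_cast hsum_low
      have hGjs : (G:ℤ) - j = n * d - n * w := by linarith
      rw [hGjs] at hsl
      nlinarith [mul_nonneg (mul_nonneg (by linarith : (0:ℤ) ≤ (m:ℤ)) (by linarith : (0:ℤ) ≤ (n:ℤ)))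
          (mul_nonneg (by linarith : (0:ℤ) ≤ (w:ℤ)) (by linarith : (0:ℤ) ≤ (d:ℤ) - w - 1)),
        mul_pos (mul_pos (by linarith : (0:ℤ) < (j:ℤ)) (by linarith : (0:ℤ) < (m:ℤ)))
          (by linarith : (0:ℤ) < (w:ℤ))]
    have hGeqj : G = j := by rw [hweq] at hGj; omega
    have hjeqn : j = n := by omega
    intro i hi1 hiM
    rcases le_or_gt i n with h | h
    · rw [hlam_le i hi1 h]
      by_contra hne
      have hge : m * d ≤ gam i := by
        have := hlow i hi1 (by omega)
        rw [hweq] at this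
        exact this
      have hall : ∀ k ∈ Finset.Icc 1 n, m * d ≤ gam k := by
        intro k hk; rw [Finset.mem_Icc] at hk
        have := hlow k hk.1 (by omega)
        rw [hweq] at this
        exact this
      have hlt : ∑ _k ∈ Finset.Icc 1 n, (m * d) < ∑ k ∈ Finset.Icc 1 n, gam k :=
        Finset.sum_lt_sum hall ⟨i, by rw [Finset.mem_Icc]; exact ⟨hi1, h⟩, by omega⟩
      have hs : ∑ k ∈ Finset.Icc 1 n, gam k = m * (n * d) := by
        have : Finset.Icc 1 n = Finset.Icc 1 G := by rw [hGeqj, hjeqn]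
        rw [this]; exact hsplit
      rw [hs, Finset.sum_const, Nat.card_Icc, Nat.add_sub_cancel, smul_eq_mul] at hlt
      nlinarith
    · rw [hlam_gt i h]
      exact hzero_of_gt i (by omega) hiM
end

section
/- Fix m, n, d ∈ ℕ with gcd(m,n) = 1, n ≥ 2, d ≥ 2. Let λ̃ = (md−1, (md)^{n−1}) ∈ ℕ₀^M and β = (m−1, 0^{n−1}, m^{nd−1}) ∈ ℕ₀^M with M ≥ n + nd − 1. Suppose γ ∈ ℕ₀^M satisfies λ̃ ⊵ γ and (r(γ,i) − r(λ̃,i))·m = (λ̃_i − γ_i)·n for all 1 ≤ i ≤ M. Then γ = λ̃ or γ = β. -/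
set_option maxHeartbeats 1000000


lemma crp_rank_one_le (N : ℕ) (g : ℕ → ℕ) (i : ℕ) (hi : 1 ≤ i) : 1 ≤ rankF N g i := by
  have : i ∈ (Finset.Icc 1 i).filter (fun j => g j = g i) := by
    simp [Finset.mem_filter, Finset.mem_Icc, hi]
  have h := Finset.card_pos.mpr ⟨i, this⟩
  unfold rankF; omega

lemma crp_rank_le (N : ℕ) (g : ℕ → ℕ) (i : ℕ) (hi : 1 ≤ i) (hiN : i ≤ N) : rankF N g i ≤ N := by
  have hdisj : Disjoint ((Finset.Icc 1 N).filter (fun j => g i < g j))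
      ((Finset.Icc 1 i).filter (fun j => g j = g i)) := by
    rw [Finset.disjoint_left]
    intro a ha hb
    simp only [Finset.mem_filter] at ha hb
    omega
  have hsub : ((Finset.Icc 1 N).filter (fun j => g i < g j)) ∪
      ((Finset.Icc 1 i).filter (fun j => g j = g i)) ⊆ Finset.Icc 1 N := by
    intro a ha
    rcases Finset.mem_union.mp ha with h | h
    · exact Finset.mem_of_mem_filter a h
    · have := Finset.mem_of_mem_filter a h
      simp only [Finset.mem_Icc] at this ⊢; omega
  have := Finset.card_le_card hsub
  rw [Finset.card_union_of_disjoint hdisj] at this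
  simpa [rankF, Nat.card_Icc] using this

lemma crp_rank_lt_of_gt (N : ℕ) (g : ℕ → ℕ) (i j : ℕ) (hi : 1 ≤ i) (hiN : i ≤ N)
    (hj : 1 ≤ j) (hjN : j ≤ N) (h : g j < g i) : rankF N g i < rankF N g j := by
  have h1 : rankF N g i ≤ ((Finset.Icc 1 N).filter (fun a => g i ≤ g a)).card := by
    have hdisj : Disjoint ((Finset.Icc 1 N).filter (fun a => g i < g a))
        ((Finset.Icc 1 N).filter (fun a => g a = g i)) := by
      rw [Finset.disjoint_left]; intro a ha hb
      simp only [Finset.mem_filter] at ha hb; omega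
    have hsub2 : ((Finset.Icc 1 i).filter (fun a => g a = g i)) ⊆
        ((Finset.Icc 1 N).filter (fun a => g a = g i)) := by
      intro a ha; simp only [Finset.mem_filter, Finset.mem_Icc] at ha ⊢; omega
    have hU : ((Finset.Icc 1 N).filter (fun a => g i < g a)) ∪
        ((Finset.Icc 1 N).filter (fun a => g a = g i)) =
        ((Finset.Icc 1 N).filter (fun a => g i ≤ g a)) := by
      ext a; simp only [Finset.mem_union, Finset.mem_filter]; constructor
      · rintro (⟨h1, h2⟩ | ⟨h1, h2⟩) <;> exact ⟨h1, by omega⟩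
      · rintro ⟨h1, h2⟩
        rcases Nat.lt_or_ge (g i) (g a) with h3 | h3
        · exact Or.inl ⟨h1, h3⟩
        · exact Or.inr ⟨h1, by omega⟩
    calc rankF N g i ≤ ((Finset.Icc 1 N).filter (fun a => g i < g a)).card +
          ((Finset.Icc 1 N).filter (fun a => g a = g i)).card := by
          unfold rankF; exact Nat.add_le_add_left (Finset.card_le_card hsub2) _
      _ = _ := by rw [← Finset.card_union_of_disjoint hdisj, hU]
  have h2 : ((Finset.Icc 1 N).filter (fun a => g i ≤ g a)).card ≤
      ((Finset.Icc 1 N).filter (fun a => g j < g a)).card := by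
    apply Finset.card_le_card
    intro a ha; simp only [Finset.mem_filter] at ha ⊢; exact ⟨ha.1, by omega⟩
  have h3 : ((Finset.Icc 1 N).filter (fun a => g j < g a)).card < rankF N g j := by
    have : j ∈ (Finset.Icc 1 j).filter (fun a => g a = g j) := by
      simp [Finset.mem_filter, Finset.mem_Icc, hj]
    have := Finset.card_pos.mpr ⟨j, this⟩
    unfold rankF; omega
  omega

lemma crp_rank_lt_of_eq (N : ℕ) (g : ℕ → ℕ) (i j : ℕ) (hi : 1 ≤ i)
    (hij : i < j) (hjN : j ≤ N) (h : g i = g j) : rankF N g i < rankF N g j := by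
  unfold rankF
  rw [h]
  have hsub : ((Finset.Icc 1 i).filter (fun a => g a = g j)) ⊂
      ((Finset.Icc 1 j).filter (fun a => g a = g j)) := by
    rw [Finset.ssubset_iff_of_subset]
    · exact ⟨j, by simp [Finset.mem_filter, Finset.mem_Icc]; omega, by
        simp [Finset.mem_filter, Finset.mem_Icc]; omega⟩
    · intro a ha; simp only [Finset.mem_filter, Finset.mem_Icc] at ha ⊢; omega
  have := Finset.card_lt_card hsub
  omega

lemma crp_rank_inj (N : ℕ) (g : ℕ → ℕ) (i j : ℕ) (hi : 1 ≤ i) (hiN : i ≤ N)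
    (hj : 1 ≤ j) (hjN : j ≤ N) (h : rankF N g i = rankF N g j) : i = j := by
  rcases Nat.lt_trichotomy (g i) (g j) with hg | hg | hg
  · have := crp_rank_lt_of_gt N g j i hj hjN hi hiN hg; omega
  · rcases Nat.lt_trichotomy i j with hij | hij | hij
    · have := crp_rank_lt_of_eq N g i j hi hij hjN hg; omega
    · exact hij
    · have := crp_rank_lt_of_eq N g j i hj hij hiN hg.symm; omega
  · have := crp_rank_lt_of_gt N g i j hi hiN hj hjN hg; omega

lemma crp_rank_surj (N : ℕ) (g : ℕ → ℕ) (t : ℕ) (ht1 : 1 ≤ t) (htN : t ≤ N) :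
    ∃ i, 1 ≤ i ∧ i ≤ N ∧ rankF N g i = t := by
  classical
  have hinj : Set.InjOn (rankF N g) (Finset.Icc 1 N) := by
    intro a ha b hb hab
    simp only [Finset.coe_Icc, Set.mem_Icc] at ha hb
    exact crp_rank_inj N g a b ha.1 ha.2 hb.1 hb.2 hab
  have hsub : (Finset.Icc 1 N).image (rankF N g) ⊆ Finset.Icc 1 N := by
    intro r hr
    rcases Finset.mem_image.mp hr with ⟨a, ha, rfl⟩
    simp only [Finset.mem_Icc] at ha ⊢
    exact ⟨crp_rank_one_le N g a ha.1, crp_rank_le N g a ha.1 ha.2⟩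
  have hcard : ((Finset.Icc 1 N).image (rankF N g)).card = (Finset.Icc 1 N).card :=
    Finset.card_image_of_injOn hinj
  have heq := Finset.eq_of_subset_of_card_le hsub (le_of_eq hcard.symm)
  have : t ∈ (Finset.Icc 1 N).image (rankF N g) := by
    rw [heq]; simp only [Finset.mem_Icc]; exact ⟨ht1, htN⟩
  rcases Finset.mem_image.mp this with ⟨a, ha, hat⟩
  simp only [Finset.mem_Icc] at ha
  exact ⟨a, ha.1, ha.2, hat⟩

lemma crp_ranklam (m n d M : ℕ) (hm : 1 ≤ m) (hn : 2 ≤ n) (hd : 2 ≤ d)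
    (hM : n + n * d - 1 ≤ M) (lam : ℕ → ℕ)
    (hlam : ∀ i, lam i = if i = 1 then m * d - 1 else if i ≤ n then m * d else 0) :
    rankF M lam 1 = n ∧ (∀ j, 2 ≤ j → j ≤ n → rankF M lam j = j - 1) ∧
      (∀ i, n < i → i ≤ M → rankF M lam i = i) := by
  have hmd : 2 ≤ m * d := le_trans hd (Nat.le_mul_of_pos_left d hm)
  have hnd : 4 ≤ n * d := by nlinarith
  have hnM : n ≤ M := by omega
  refine ⟨?_, ?_, ?_⟩
  · unfold rankF
    have h1 : (Finset.Icc 1 M).filter (fun j => lam 1 < lam j) = Finset.Icc 2 n := by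
      ext j
      simp only [Finset.mem_filter, Finset.mem_Icc, hlam]
      split_ifs with h h2 <;> omega
    have h2 : (Finset.Icc 1 1).filter (fun j => lam j = lam 1) = {1} := by
      ext j
      simp only [Finset.mem_filter, Finset.mem_Icc, Finset.mem_singleton]
      constructor
      · rintro ⟨h, -⟩; omega
      · rintro rfl; simp
    rw [h1, h2, Nat.card_Icc]
    simp only [Finset.card_singleton]; omega
  · intro j hj2 hjn
    unfold rankF
    have h1 : (Finset.Icc 1 M).filter (fun a => lam j < lam a) = ∅ := by
      ext a
      simp only [Finset.mem_filter, Finset.mem_Icc, hlam, Finset.notMem_empty, iff_false]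
      split_ifs with h h2 <;> omega
    have h2 : (Finset.Icc 1 j).filter (fun a => lam a = lam j) = Finset.Icc 2 j := by
      ext a
      simp only [Finset.mem_filter, Finset.mem_Icc, hlam]
      split_ifs with h h2 <;> omega
    rw [h1, h2, Finset.card_empty, Nat.card_Icc]
    omega
  · intro i hni hiM
    unfold rankF
    have h1 : (Finset.Icc 1 M).filter (fun a => lam i < lam a) = Finset.Icc 1 n := by
      ext a
      simp only [Finset.mem_filter, Finset.mem_Icc, hlam]
      split_ifs with h h2 <;> omega
    have h2 : (Finset.Icc 1 i).filter (fun a => lam a = lam i) = Finset.Icc (n+1) i := by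
      ext a
      simp only [Finset.mem_filter, Finset.mem_Icc, hlam]
      split_ifs with h h2 <;> omega
    rw [h1, h2, Nat.card_Icc, Nat.card_Icc]
    omega
/-- for `λ̃ = (md−1, (md)^{n−1})` and `β = (m−1, 0^{n−1}, m^{nd−1})`
in `ℕ₀^M` (`gcd(m,n)=1`, `n ≥ 2`, `d ≥ 2`, `M ≥ n + nd − 1`), any `γ ∈ ℕ₀^M` with
`λ̃ ⊵ γ` satisfying the rank equations `(r(γ,i) − r(λ̃,i))·m = (λ̃_i − γ_i)·n`
for `1 ≤ i ≤ M` equals `λ̃` or `β`. -/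
theorem critical_pair_unique_shifted_rectangle
    (m n d M : ℕ) (hm : 1 ≤ m) (hn : 2 ≤ n) (hd : 2 ≤ d)
    (hgcd : Nat.gcd m n = 1) (hM : n + n * d - 1 ≤ M)
    (lam bet gam : ℕ → ℕ)
    (hlam : ∀ i, lam i = if i = 1 then m * d - 1 else if i ≤ n then m * d else 0)
    (hbet : ∀ i, bet i = if i = 1 then m - 1
      else if n < i ∧ i ≤ n + n * d - 1 then m else 0)
    (hdom : tleF M lam gam)
    (hrank : ∀ i, 1 ≤ i → i ≤ M →
      ((rankF M gam i : ℤ) - (rankF M lam i : ℤ)) * m = ((lam i : ℤ) - (gam i : ℤ)) * n) :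
    (∀ i, 1 ≤ i → i ≤ M → gam i = lam i) ∨ (∀ i, 1 ≤ i → i ≤ M → gam i = bet i) := by
  clear hdom
  obtain ⟨hRl1, hRl2, hRl3⟩ := crp_ranklam m n d M hm hn hd hM lam hlam
  have hmd : 2 ≤ m * d := le_trans hd (Nat.le_mul_of_pos_left d hm)
  have hnd : 4 ≤ n * d := by nlinarith
  have h2nd : 2 * n ≤ n * d := by nlinarith
  have hndM : n * d + 1 ≤ M := by omega
  have hn1M : n + 1 ≤ M := by omega
  have hm' : (1:ℤ) ≤ (m:ℕ) := by exact_mod_cast hm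
  have hn' : (2:ℤ) ≤ (n:ℕ) := by exact_mod_cast hn
  have hd' : (2:ℤ) ≤ (d:ℕ) := by exact_mod_cast hd
  obtain ⟨R, hRdef⟩ : ∃ R : ℕ → ℕ, R = rankF M gam := ⟨_, rfl⟩
  -- basic rank facts for gam
  have R1 : ∀ i, 1 ≤ i → 1 ≤ R i := by rw [hRdef]; exact fun i hi => crp_rank_one_le M gam i hi
  have RM : ∀ i, 1 ≤ i → i ≤ M → R i ≤ M := by
    rw [hRdef]; exact fun i hi hiM => crp_rank_le M gam i hi hiM
  have Rgt : ∀ i j, 1 ≤ i → i ≤ M → 1 ≤ j → j ≤ M → gam j < gam i → R i < R j := by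
    rw [hRdef]; exact fun i j a b c e f => crp_rank_lt_of_gt M gam i j a b c e f
  have Req : ∀ i j, 1 ≤ i → i < j → j ≤ M → gam i = gam j → R i < R j := by
    rw [hRdef]; exact fun i j a b c e => crp_rank_lt_of_eq M gam i j a b c e
  have Rinj : ∀ i j, 1 ≤ i → i ≤ M → 1 ≤ j → j ≤ M → R i = R j → i = j := by
    rw [hRdef]; exact fun i j a b c e f => crp_rank_inj M gam i j a b c e f
  have Rsurj : ∀ t, 1 ≤ t → t ≤ M → ∃ i, 1 ≤ i ∧ i ≤ M ∧ R i = t := by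
    rw [hRdef]; exact fun t a b => crp_rank_surj M gam t a b
  -- extraction of k
  have hK : ∀ i, 1 ≤ i → i ≤ M → ∃ k : ℤ,
      (R i : ℤ) = (rankF M lam i : ℤ) + n * k ∧ (gam i : ℤ) = (lam i : ℤ) - m * k := by
    intro i h1 h2
    have h := hrank i h1 h2
    rw [← hRdef] at h
    have hco : IsCoprime (n : ℤ) (m : ℤ) := by
      rw [Int.isCoprime_iff_gcd_eq_one]
      simpa [Nat.gcd_comm] using hgcd
    have hdvd : (n : ℤ) ∣ ((R i : ℤ) - (rankF M lam i : ℤ)) := by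
      apply hco.dvd_of_dvd_mul_right
      rw [h]
      exact dvd_mul_left _ _
    obtain ⟨k, hk⟩ := hdvd
    have hn0 : (n:ℤ) ≠ 0 := by linarith
    have h2' : (↑m * k) * n = ((lam i : ℤ) - gam i) * n := by
      rw [← h, hk]; ring
    have h3 := mul_right_cancel₀ hn0 h2'
    exact ⟨k, by linarith, by linarith⟩
  -- specialized forms
  have hU1 : ∃ k : ℤ, 0 ≤ k ∧ k ≤ (d:ℤ) - 1 ∧ (R 1 : ℤ) = n + n * k ∧
      (gam 1 : ℤ) = m * d - 1 - m * k := by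
    obtain ⟨k, hk1, hk2⟩ := hK 1 le_rfl (by omega)
    rw [hRl1] at hk1
    have hlam1 : (lam 1 : ℤ) = m * d - 1 := by rw [hlam 1]; simp only [if_pos rfl]; push_cast; omega
    rw [hlam1] at hk2
    have hb1 : 0 ≤ k := by
      by_contra hneg
      push_neg at hneg
      have hkle : k ≤ -1 := by omega
      have : (n:ℤ) * k ≤ (n:ℤ) * (-1) := mul_le_mul_of_nonneg_left hkle (by linarith)
      have hR1 : (1:ℤ) ≤ (R 1 : ℤ) := by exact_mod_cast R1 1 le_rfl
      linarith
    have hb2 : k ≤ (d:ℤ) - 1 := by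
      by_contra hneg
      push_neg at hneg
      have hkge : (d:ℤ) ≤ k := by omega
      have : (m:ℤ) * d ≤ (m:ℤ) * k := mul_le_mul_of_nonneg_left hkge (by linarith)
      have hg0 : (0:ℤ) ≤ (gam 1 : ℤ) := by positivity
      linarith
    exact ⟨k, hb1, hb2, hk1, hk2⟩
  have hUj : ∀ j, 2 ≤ j → j ≤ n → ∃ k : ℤ, 0 ≤ k ∧ k ≤ d ∧
      (R j : ℤ) = j - 1 + n * k ∧ (gam j : ℤ) = m * d - m * k := by
    intro j hj2 hjn
    obtain ⟨k, hk1, hk2⟩ := hK j (by omega) (by omega)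
    rw [hRl2 j hj2 hjn] at hk1
    have hlamj : (lam j : ℤ) = m * d := by
      rw [hlam j]
      have : ¬ (j = 1) := by omega
      simp only [this, if_false, if_pos hjn]
      push_cast; ring
    rw [hlamj] at hk2
    have hcast : ((j - 1 : ℕ) : ℤ) = (j:ℤ) - 1 := by omega
    rw [hcast] at hk1
    have hj' : (2:ℤ) ≤ (j:ℤ) := by exact_mod_cast hj2
    have hjn' : (j:ℤ) ≤ (n:ℤ) := by exact_mod_cast hjn
    have hb1 : 0 ≤ k := by
      by_contra hneg
      push_neg at hneg
      have hkle : k ≤ -1 := by omega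
      have : (n:ℤ) * k ≤ (n:ℤ) * (-1) := mul_le_mul_of_nonneg_left hkle (by linarith)
      have hR1 : (1:ℤ) ≤ (R j : ℤ) := by exact_mod_cast R1 j (by omega)
      linarith
    have hb2 : k ≤ (d:ℤ) := by
      by_contra hneg
      push_neg at hneg
      have hkge : (d:ℤ) + 1 ≤ k := by omega
      have : (m:ℤ) * ((d:ℤ)+1) ≤ (m:ℤ) * k := mul_le_mul_of_nonneg_left hkge (by linarith)
      have hg0 : (0:ℤ) ≤ (gam j : ℤ) := by positivity
      nlinarith
    exact ⟨k, hb1, hb2, hk1, hk2⟩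
  have hUi : ∀ i, n < i → i ≤ M → ∃ a : ℤ, 0 ≤ a ∧
      (R i : ℤ) = i - n * a ∧ (gam i : ℤ) = m * a := by
    intro i hni hiM
    obtain ⟨k, hk1, hk2⟩ := hK i (by omega) hiM
    rw [hRl3 i hni hiM] at hk1
    have hlami : (lam i : ℤ) = 0 := by
      rw [hlam i]
      have h1 : ¬ (i = 1) := by omega
      have h2 : ¬ (i ≤ n) := by omega
      simp [h1, h2]
    rw [hlami] at hk2
    refine ⟨-k, ?_, by linarith [hk1], by linarith [hk2]⟩
    · by_contra hneg
      push_neg at hneg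
      have hkge : 1 ≤ k := by omega
      have : (m:ℤ) * 1 ≤ (m:ℤ) * k := mul_le_mul_of_nonneg_left hkge (by linarith)
      have hg0 : (0:ℤ) ≤ (gam i : ℤ) := by positivity
      linarith
  clear hrank hK hRdef
  obtain ⟨k1, hk10, hk1d, hRk1, hgk1⟩ := hU1
  by_cases hcase : k1 = 0
  · -- Case (i): gam = lam
    left
    rw [hcase] at hRk1 hgk1
    have hR1n : R 1 = n := by
      rw [mul_zero, add_zero] at hRk1; exact_mod_cast hRk1
    have hg1 : gam 1 = m * d - 1 := by
      rw [mul_zero, sub_zero] at hgk1; push_cast at hgk1; omega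
    -- (i-a): position n+1 is zero with rank n+1
    obtain ⟨a, ha0, hRa, hga⟩ := hUi (n+1) (by omega) hn1M
    have hRn1pos : 1 ≤ R (n+1) := R1 (n+1) (by omega)
    have ha1 : a ≤ 1 := by
      by_contra h
      push_neg at h
      have h2 : (2:ℤ) ≤ a := by omega
      have hmul : (n:ℤ)*2 ≤ (n:ℤ)*a := mul_le_mul_of_nonneg_left h2 (by linarith)
      have hRpos : (1:ℤ) ≤ (R (n+1):ℤ) := by exact_mod_cast hRn1pos
      push_cast at hRa
      linarith
    have ha00 : a = 0 := by
      rcases (by omega : a = 0 ∨ a = 1) with h | h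
      · exact h
      exfalso
      rw [h, mul_one] at hRa hga
      have hRn1 : R (n+1) = 1 := by push_cast at hRa; omega
      have hgn1 : gam (n+1) = m := by push_cast at hga; omega
      have hmd2 : m*2 ≤ m*d := Nat.mul_le_mul_left m hd
      rcases Nat.lt_trichotomy (gam (n+1)) (gam 1) with hlt | heq | hgt
      · have := Rgt 1 (n+1) le_rfl (by omega) (by omega) hn1M hlt
        omega
      · have := Req 1 (n+1) le_rfl (by omega) hn1M heq.symm
        omega
      · omega
    rw [ha00, mul_zero] at hRa hga
    have hRn1 : R (n+1) = n+1 := by push_cast at hRa; omega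
    have hgn1 : gam (n+1) = 0 := by push_cast at hga; omega
    -- (i-b): chain — no position in [2,n] is zero
    have hchain : ∀ j, 2 ≤ j → j ≤ n → gam j ≠ 0 := by
      intro j
      induction j using Nat.strong_induction_on with
      | _ j ih =>
        intro hj2 hjn hg0
        obtain ⟨k, hk0, hkd, hRk, hgk⟩ := hUj j hj2 hjn
        have hmdk : (m:ℤ) * ((d:ℤ) - k) = 0 := by
          rw [hg0] at hgk
          push_cast at hgk
          have hexp : (m:ℤ)*((d:ℤ)-k) = (m:ℤ)*(d:ℤ) - (m:ℤ)*k := by ring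
          linarith [hgk]
        have hkd' : k = (d:ℤ) := by
          rcases mul_eq_zero.mp hmdk with h | h
          · exfalso; linarith
          · linarith
        rw [hkd'] at hRk
        have hRjn : R j = j - 1 + n*d := by
          have : (R j:ℤ) = (j:ℤ) - 1 + ((n*d:ℕ):ℤ) := by push_cast; linarith [hRk]
          omega
        obtain ⟨x, hx1, hxM, hxR⟩ := Rsurj (n*d + j - 2) (by omega) (by omega)
        have hgx : gam x = 0 := by
          by_contra hpos
          have hlt := Rgt x (n+1) hx1 hxM (by omega) hn1M (by omega)
          omega
        have hx_ne1 : x ≠ 1 := by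
          intro h; rw [h] at hgx; omega
        have hxlt : x < j := by
          rcases Nat.lt_trichotomy x j with h | h | h
          · exact h
          · exfalso; rw [h] at hxR; omega
          · exfalso
            have := Req j x (by omega) h hxM (by omega)
            omega
        exact ih x hxlt (by omega) (by omega) hgx
    -- ranks of positive non-1 items are ≤ n−1
    have hranksmall : ∀ x, 1 ≤ x → x ≤ M → x ≠ 1 → gam x ≠ 0 → R x ≤ n - 1 := by
      intro x h1 h2 h3 h4
      have hlt := Rgt x (n+1) h1 h2 (by omega) hn1M (by omega)
      have : R x ≠ n := by
        intro he
        exact h3 (Rinj x 1 h1 h2 le_rfl (by omega) (by rw [he, hR1n]))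
      omega
    -- (i-c): all positions > n are zero
    have htail0 : ∀ i, n < i → i ≤ M → gam i = 0 := by
      intro i hni hiM
      by_contra hpos
      have hcard : (insert i (Finset.Icc 2 n)).card ≤ (Finset.Icc 1 (n-1)).card := by
        apply Finset.card_le_card_of_injOn R
        · intro x hx
          simp only [Finset.mem_coe, Finset.mem_insert, Finset.mem_Icc] at hx
          simp only [Finset.mem_coe, Finset.mem_Icc]
          rcases hx with rfl | hx
          · exact ⟨R1 x (by omega), hranksmall x (by omega) hiM (by omega) hpos⟩
          · exact ⟨R1 x (by omega), hranksmall x (by omega) (by omega)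
              (by omega) (hchain x hx.1 hx.2)⟩
        · intro a' ha' b' hb' hab
          simp only [Finset.coe_insert, Set.mem_insert_iff, Finset.coe_Icc, Set.mem_Icc] at ha' hb'
          have ha'' : 1 ≤ a' ∧ a' ≤ M := by rcases ha' with rfl | h <;> omega
          have hb'' : 1 ≤ b' ∧ b' ≤ M := by rcases hb' with rfl | h <;> omega
          exact Rinj a' b' ha''.1 ha''.2 hb''.1 hb''.2 hab
      rw [Finset.card_insert_of_notMem (by simp only [Finset.mem_Icc]; omega),
        Nat.card_Icc, Nat.card_Icc] at hcard
      omega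
    -- (i-d): positions in [2,n] have value m*d
    intro i hi1 hiM
    by_cases h1 : i = 1
    · subst h1; rw [hlam 1, if_pos rfl]; omega
    · rw [hlam i, if_neg h1]
      by_cases h2 : i ≤ n
      · rw [if_pos h2]
        obtain ⟨k, hk0, hkd, hRk, hgk⟩ := hUj i (by omega) h2
        have hRsm := hranksmall i (by omega) (by omega) h1 (hchain i (by omega) h2)
        have hk00 : k = 0 := by
          by_contra h
          have h1' : (1:ℤ) ≤ k := by omega
          have hmul : (n:ℤ)*1 ≤ (n:ℤ)*k := mul_le_mul_of_nonneg_left h1' (by linarith)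
          have hRle : (R i:ℤ) ≤ (n:ℤ) - 1 := by omega
          have hi2 : (2:ℤ) ≤ (i:ℤ) := by exact_mod_cast (by omega : 2 ≤ i)
          linarith
        rw [hk00, mul_zero, sub_zero] at hgk
        push_cast at hgk
        omega
      · rw [if_neg h2]
        exact htail0 i (by omega) hiM
  · -- Case (ii): gam = bet
    right
    have hk11 : (1:ℤ) ≤ k1 := by omega
    -- (ii-a): position n+1 has value m and rank 1
    obtain ⟨a, ha0, hRa, hga⟩ := hUi (n+1) (by omega) hn1M
    have hRn1pos : 1 ≤ R (n+1) := R1 (n+1) (by omega)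
    have ha1 : a ≤ 1 := by
      by_contra h
      push_neg at h
      have h2 : (2:ℤ) ≤ a := by omega
      have hmul : (n:ℤ)*2 ≤ (n:ℤ)*a := mul_le_mul_of_nonneg_left h2 (by linarith)
      have hRpos : (1:ℤ) ≤ (R (n+1):ℤ) := by exact_mod_cast hRn1pos
      push_cast at hRa
      linarith
    have hane : a = 1 := by
      rcases (by omega : a = 0 ∨ a = 1) with h | h
      swap
      · exact h
      exfalso
      rw [h, mul_zero] at hRa hga
      have hRn1 : R (n+1) = n+1 := by push_cast at hRa; omega
      have hgn1 : gam (n+1) = 0 := by push_cast at hga; omega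
      by_cases hg1pos : gam 1 = 0
      · -- then m = 1, k1 = d−1, R 1 = n*d
        have hmk : (m:ℤ) * ((d:ℤ) - k1) = 1 := by
          rw [hg1pos] at hgk1
          push_cast at hgk1
          have hexp : (m:ℤ)*((d:ℤ)-k1) = (m:ℤ)*(d:ℤ) - (m:ℤ)*k1 := by ring
          linarith [hgk1]
        have hdk1pos : (1:ℤ) ≤ (d:ℤ) - k1 := by omega
        have hk1v : k1 = (d:ℤ) - 1 := by
          by_contra hne
          have h2 : (2:ℤ) ≤ (d:ℤ) - k1 := by omega
          have : (m:ℤ)*2 ≤ (m:ℤ)*((d:ℤ)-k1) := mul_le_mul_of_nonneg_left h2 (by linarith)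
          linarith
        have hR1nd : R 1 = n*d := by
          have : (R 1:ℤ) = ((n*d:ℕ):ℤ) := by rw [hRk1, hk1v]; push_cast; ring
          omega
        obtain ⟨y, hy1, hyM, hyR⟩ := Rsurj (n*d - 1) (by omega) (by omega)
        have hgy : gam y = 0 := by
          by_contra hpos
          have := Rgt y (n+1) hy1 hyM (by omega) hn1M (by omega)
          omega
        rcases Nat.lt_trichotomy y 1 with h'|h'|h'
        · omega
        · rw [h'] at hyR; omega
        · have := Req 1 y le_rfl h' hyM (by omega)
          omega
      · -- gam 1 > 0 gives R 1 ≤ n, impossible since k1 ≥ 1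
        have hlt := Rgt 1 (n+1) le_rfl (by omega) (by omega) hn1M (by omega)
        have hmul : (n:ℤ)*1 ≤ (n:ℤ)*k1 := mul_le_mul_of_nonneg_left hk11 (by linarith)
        have : (R 1:ℤ) < (n:ℤ)+1 := by
          have h' : R 1 < n + 1 := by omega
          exact_mod_cast h'
        linarith
    rw [hane, mul_one] at hRa hga
    have hRn1 : R (n+1) = 1 := by push_cast at hRa; omega
    have hgn1 : gam (n+1) = m := by push_cast at hga; omega
    -- (ii-b): all values ≤ m
    have hmax : ∀ i, 1 ≤ i → i ≤ M → gam i ≤ m := by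
      intro i h1 h2
      by_contra h
      have := Rgt i (n+1) h1 h2 (by omega) hn1M (by omega)
      have := R1 i h1
      omega
    -- (ii-c): k1 = d − 1
    have hg1m : gam 1 ≤ m := hmax 1 le_rfl (by omega)
    have hg1m' : (gam 1:ℤ) ≤ (m:ℤ) := by exact_mod_cast hg1m
    have hk1d1 : k1 = (d:ℤ) - 1 := by
      by_contra hne
      have hk1le : k1 ≤ (d:ℤ) - 2 := by omega
      have hmul : (m:ℤ)*k1 ≤ (m:ℤ)*((d:ℤ)-2) := mul_le_mul_of_nonneg_left hk1le (by linarith)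
      have hexp : (m:ℤ)*((d:ℤ)-2) = (m:ℤ)*(d:ℤ) - 2*(m:ℤ) := by ring
      have hgam1ge : (2:ℤ)*(m:ℤ) - 1 ≤ (gam 1:ℤ) := by rw [hgk1]; linarith
      have hm1 : m = 1 := by
        have : (2:ℤ)*(m:ℤ) - 1 ≤ (m:ℤ) := by linarith
        have : (m:ℤ) ≤ 1 := by linarith
        omega
      have hm1' : (m:ℤ) = 1 := by exact_mod_cast congrArg (Nat.cast : ℕ → ℤ) hm1
      rw [hm1', one_mul, one_mul] at hgk1
      have hk1v : k1 = (d:ℤ) - 2 := by omega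
      have hg11 : gam 1 = 1 := by omega
      have hR1v : R 1 = n*d - n := by
        have : (R 1:ℤ) = ((n*d:ℕ):ℤ) - (n:ℤ) := by rw [hRk1, hk1v]; push_cast; ring
        omega
      obtain ⟨y, hy1, hyM, hyR⟩ := Rsurj (n*d - n - 1) (by omega) (by omega)
      have hgym := hmax y hy1 hyM
      rcases Nat.lt_trichotomy (gam y) (gam 1) with h'|h'|h'
      · have := Rgt 1 y le_rfl (by omega) hy1 hyM h'
        omega
      · rcases Nat.lt_trichotomy y 1 with h''|h''|h''
        · omega
        · rw [h''] at hyR; omega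
        · have := Req 1 y le_rfl h'' hyM h'.symm
          omega
      · omega
    have hg1v : gam 1 = m - 1 := by
      have : (gam 1:ℤ) = (m:ℤ) - 1 := by rw [hgk1, hk1d1]; ring
      omega
    have hR1nd : R 1 = n*d := by
      have : (R 1:ℤ) = ((n*d:ℕ):ℤ) := by rw [hRk1, hk1d1]; push_cast; ring
      omega
    -- (ii-d): positions 2..n are zero
    have hzero2n : ∀ j, 2 ≤ j → j ≤ n → gam j = 0 := by
      intro j hj2 hjn
      by_contra hpos
      obtain ⟨k, hk0, hkd, hRk, hgk⟩ := hUj j hj2 hjn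
      have hgle : (gam j:ℤ) ≤ (m:ℤ) := by exact_mod_cast hmax j (by omega) (by omega)
      have hgpos : (1:ℤ) ≤ (gam j:ℤ) := by exact_mod_cast (by omega : 1 ≤ gam j)
      have hexp : (m:ℤ)*((d:ℤ)-k) = (m:ℤ)*(d:ℤ) - (m:ℤ)*k := by ring
      have hdk1 : (d:ℤ) - k = 1 := by
        rcases lt_trichotomy ((d:ℤ)-k) 1 with h'|h'|h'
        · exfalso
          have h0 : (d:ℤ) - k ≤ 0 := by omega
          have : (m:ℤ)*((d:ℤ)-k) ≤ (m:ℤ)*0 := mul_le_mul_of_nonneg_left h0 (by linarith)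
          linarith [hgk]
        · exact h'
        · exfalso
          have h2' : (2:ℤ) ≤ (d:ℤ)-k := by omega
          have : (m:ℤ)*2 ≤ (m:ℤ)*((d:ℤ)-k) := mul_le_mul_of_nonneg_left h2' (by linarith)
          linarith [hgk]
      have hgjm : gam j = m := by
        have hmm : (m:ℤ)*((d:ℤ)-k) = (m:ℤ) := by rw [hdk1, mul_one]
        have : (gam j:ℤ) = (m:ℤ) := by rw [hgk]; linarith [hexp, hmm]
        exact_mod_cast this
      have := Req j (n+1) (by omega) (by omega) hn1M (by rw [hgjm, hgn1])
      have := R1 j (by omega)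
      omega
    -- ranks of positions 2..n
    have hR2n : ∀ j, 2 ≤ j → j ≤ n → R j = n*d + j - 1 := by
      intro j hj2 hjn
      obtain ⟨k, hk0, hkd, hRk, hgk⟩ := hUj j hj2 hjn
      have h0 : gam j = 0 := hzero2n j hj2 hjn
      have hmdk : (m:ℤ) * ((d:ℤ) - k) = 0 := by
        rw [h0] at hgk
        push_cast at hgk
        have hexp : (m:ℤ)*((d:ℤ)-k) = (m:ℤ)*(d:ℤ) - (m:ℤ)*k := by ring
        linarith [hgk]
      have hk' : k = (d:ℤ) := by
        rcases mul_eq_zero.mp hmdk with h'|h'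
        · exfalso; linarith
        · linarith
      rw [hk'] at hRk
      have : (R j:ℤ) = (j:ℤ) - 1 + ((n*d:ℕ):ℤ) := by push_cast; linarith [hRk]
      omega
    -- (ii-e): positions n+1 .. n+nd−1 have value m
    have hmid : ∀ i, n < i → i ≤ n + n*d - 1 → gam i = m := by
      intro i hni hiM'
      obtain ⟨x, hx1, hxM, hxR⟩ := Rsurj (i - n) (by omega) (by omega)
      have hx_ne1 : x ≠ 1 := by
        intro h'; rw [h'] at hxR; omega
      have hx_gt : n < x := by
        by_contra h'
        push_neg at h'
        have := hR2n x (by omega) h'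
        omega
      obtain ⟨b, hb0, hRb, hgb⟩ := hUi x hx_gt hxM
      have hb_pos : 1 ≤ b := by
        by_contra h'
        have hb00 : b = 0 := by omega
        rw [hb00, mul_zero] at hRb hgb
        have hgx0 : gam x = 0 := by push_cast at hgb; omega
        have hxt : x = i - n := by push_cast at hRb; omega
        rcases Nat.lt_trichotomy (gam x) (gam 1) with h'|h'|h'
        · have := Rgt 1 x le_rfl (by omega) hx1 hxM h'
          omega
        · have := Req 1 x le_rfl (by omega) hxM h'.symm
          omega
        · omega
      have hb1 : b = 1 := by
        by_contra h'
        have h2 : (2:ℤ) ≤ b := by omega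
        have : (m:ℤ)*2 ≤ (m:ℤ)*b := mul_le_mul_of_nonneg_left h2 (by linarith)
        have : (gam x:ℤ) ≤ (m:ℤ) := by exact_mod_cast hmax x (by omega) hxM
        linarith [hgb]
      rw [hb1, mul_one] at hRb hgb
      have hgxm : gam x = m := by push_cast at hgb; omega
      have hxi : x = i := by push_cast at hRb; omega
      rw [← hxi]; exact hgxm
    -- (ii-f): positions > n+nd−1 are zero
    have hfar : ∀ i, n + n*d - 1 < i → i ≤ M → gam i = 0 := by
      intro i hgt hiM
      obtain ⟨b, hb0, hRb, hgb⟩ := hUi i (by omega) hiM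
      by_contra hpos
      have hb1 : (1:ℤ) ≤ b := by
        by_contra h'
        have : b = 0 := by omega
        rw [this, mul_zero] at hgb
        push_cast at hgb
        omega
      have hmge : (m:ℤ) ≤ (gam i:ℤ) := by
        have : (m:ℤ)*1 ≤ (m:ℤ)*b := mul_le_mul_of_nonneg_left hb1 (by linarith)
        linarith [hgb]
      have hgt1 : gam 1 < gam i := by
        have : m ≤ gam i := by exact_mod_cast hmge
        omega
      have hlt := Rgt i 1 (by omega) hiM le_rfl (by omega) hgt1
      have hb2 : (2:ℤ) ≤ b := by
        by_contra h'
        have hbv : b = 1 := by omega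
        rw [hbv, mul_one] at hRb
        push_cast at hRb
        omega
      have : (m:ℤ)*2 ≤ (m:ℤ)*b := mul_le_mul_of_nonneg_left hb2 (by linarith)
      have : (gam i:ℤ) ≤ (m:ℤ) := by exact_mod_cast hmax i (by omega) hiM
      linarith [hgb]
    -- conclude
    intro i hi1 hiM
    by_cases h1 : i = 1
    · subst h1; rw [hbet 1, if_pos rfl]; omega
    · rw [hbet i, if_neg h1]
      by_cases h2 : n < i ∧ i ≤ n + n * d - 1
      · rw [if_pos h2]; exact hmid i h2.1 h2.2
      · rw [if_neg h2]
        rcases Nat.lt_or_ge n i with h'|h'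
        · exact hfar i (by omega) hiM
        · exact hzero2n i (by omega) h'
end

section
/- Let λ, β be as in a (−m/n)-critical pair with gcd(m,n)=1: λ ⊳ β and (r(β,i) − r(λ,i))κ + λ_i − β_i is divisible by nκ + m for all i, where λ is a partition. If i > ℓ(λ) and β_i = 0, then β_j = 0 for all j > i. -/
/-- let `(λ,β)` be a `(−m/n)`-critical pair with `λ` a partition of
length `L` (`gcd(m,n)=1`). If `i > L = ℓ(λ)` and `β_i = 0`, then `β_j = 0` for all
`j > i`. -/
theorem critical_pair_trailing_zeros
    (N m n L : ℕ) (hm : 1 ≤ m) (hn : 1 ≤ n) (hgcd : Nat.gcd m n = 1)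
    (lam β : ℕ → ℕ)
    (hdec : ∀ i, 1 ≤ i → lam (i + 1) ≤ lam i)
    (hLpos : 0 < lam L) (hL0 : ∀ i, L < i → lam i = 0)
    (hdom : tltF N lam β)
    (hdiv : ∀ i, 1 ≤ i → i ≤ N →
      (Polynomial.C (n : ℚ) * Polynomial.X + Polynomial.C (m : ℚ)) ∣
        (Polynomial.C ((rankF N β i : ℚ) - (rankF N lam i : ℚ)) * Polynomial.X +
          Polynomial.C ((lam i : ℚ) - (β i : ℚ)))) :
    ∀ i, L < i → i ≤ N → β i = 0 → ∀ j, i < j → j ≤ N → β j = 0 := by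

  intro i hLi hiN hbi j hij hjN
  have hi1 : 1 ≤ i := by omega
  -- antitonicity of lam
  have hanti : ∀ a b : ℕ, 1 ≤ a → a ≤ b → lam b ≤ lam a := by
    intro a b ha hab
    induction b with
    | zero => omega
    | succ k ih =>
      rcases Nat.lt_or_ge a (k+1) with h | h
      · exact le_trans (hdec k (by omega)) (ih (by omega))
      · have : a = k + 1 := by omega
        simp [this]
  have hlami : lam i = 0 := hL0 i hLi
  -- rankF of lam at i equals i
  have hrl : rankF N lam i = i := by
    unfold rankF
    have h1 : (Finset.Icc 1 N).filter (fun j => lam i < lam j) = Finset.Icc 1 L := by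
      ext x
      simp only [Finset.mem_filter, Finset.mem_Icc, hlami]
      constructor
      · rintro ⟨⟨hx1, _⟩, hx⟩
        refine ⟨hx1, ?_⟩
        by_contra h
        rw [hL0 x (by omega)] at hx
        omega
      · rintro ⟨hx1, hxL⟩
        exact ⟨⟨hx1, by omega⟩, lt_of_lt_of_le hLpos (hanti x L hx1 hxL)⟩
    have h2 : (Finset.Icc 1 i).filter (fun j => lam j = lam i) = Finset.Icc (L+1) i := by
      ext x
      simp only [Finset.mem_filter, Finset.mem_Icc, hlami]
      constructor
      · rintro ⟨⟨hx1, hxi⟩, hx⟩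
        refine ⟨?_, hxi⟩
        by_contra h
        have hxL : x ≤ L := by omega
        have := lt_of_lt_of_le hLpos (hanti x L hx1 hxL)
        omega
      · rintro ⟨hx1, hxi⟩
        exact ⟨⟨by omega, hxi⟩, hL0 x (by omega)⟩
    rw [h1, h2, Nat.card_Icc, Nat.card_Icc]
    omega
  -- rankF of β at i equals i, from the divisibility
  have hrb : rankF N β i = i := by
    obtain ⟨q, hq⟩ := hdiv i hi1 hiN
    rw [hrl, hlami, hbi] at hq
    have hev := congrArg (Polynomial.eval (-(m:ℚ)/(n:ℚ))) hq
    have hn0 : (n:ℚ) ≠ 0 := by positivity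
    have hm0 : (m:ℚ) ≠ 0 := by positivity
    simp only [Polynomial.eval_add, Polynomial.eval_mul, Polynomial.eval_C,
      Polynomial.eval_X] at hev
    have hroot : (n:ℚ) * (-(m:ℚ)/(n:ℚ)) + (m:ℚ) = 0 := by field_simp; ring
    rw [hroot, zero_mul] at hev
    have hd0 : (rankF N β i : ℚ) - (i : ℚ) = 0 := by
      have hx0 : (-(m:ℚ)/(n:ℚ)) ≠ 0 := by
        simp [div_eq_zero_iff, hn0, hm0]
      have : ((rankF N β i : ℚ) - (i : ℚ)) * (-(m:ℚ)/(n:ℚ)) = 0 := by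
        push_cast at hev ⊢
        linarith [hev]
      exact (mul_eq_zero.mp this).resolve_right hx0
    have : (rankF N β i : ℚ) = (i : ℚ) := by linarith
    exact_mod_cast this
  -- counting argument
  unfold rankF at hrb
  rw [hbi] at hrb
  set A := (Finset.Icc 1 N).filter (fun j => 0 < β j) with hA
  set B := (Finset.Icc 1 i).filter (fun j => β j = 0) with hB
  set B' := (Finset.Icc 1 i).filter (fun j => 0 < β j) with hB'
  have hsplit : B.card + B'.card = i := by
    have h := Finset.card_filter_add_card_filter_not
      (s := Finset.Icc 1 i) (p := fun j => β j = 0)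
    simp only [Nat.card_Icc] at h
    have hBB : (Finset.Icc 1 i).filter (fun j => ¬ β j = 0) = B' := by
      apply Finset.filter_congr
      intro x _
      simp [Nat.pos_iff_ne_zero]
    rw [hBB, ← hB] at h
    omega
  have hAB : B' ⊆ A := by
    intro x hx
    simp only [hA, hB', Finset.mem_filter, Finset.mem_Icc] at hx ⊢
    exact ⟨⟨hx.1.1, by omega⟩, hx.2⟩
  have hcard : A.card ≤ B'.card := by omega
  have hAeq : B' = A := Finset.eq_of_subset_of_card_le hAB hcard
  by_contra hc
  have hjA : j ∈ A := by
    simp only [hA, Finset.mem_filter, Finset.mem_Icc]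
    exact ⟨⟨by omega, hjN⟩, by omega⟩
  rw [← hAeq] at hjA
  simp only [hB', Finset.mem_filter, Finset.mem_Icc] at hjA
  omega
end

section
/- For the partition λ = ((md)^n) with gcd(m,n) = 1, n ≥ 2, d ≥ 1, and β = (0^n, m^{nd}): the pair (λ, β) satisfies the critical-pair rank equations (r(β,i) − i)m = (λ_i − β_i)n for all 1 ≤ i ≤ n(d+1), and λ ⊳ β. -/
/-- Auxiliary: list of a constant map over range is replicate. -/
lemma CP_map_range_const (t c : ℕ) (g : ℕ → ℕ) (h : ∀ j < t, g j = c) :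
    (List.range t).map g = List.replicate t c := by
  rw [List.eq_replicate_iff]
  constructor
  · simp
  · intro b hb
    simp only [List.mem_map, List.mem_range] at hb
    obtain ⟨j, hj, rfl⟩ := hb
    exact h j hj

lemma CP_getD_rep_rep (k a v i : ℕ) :
    (List.replicate k v ++ List.replicate a (0:ℕ)).getD i 0 = if i < k then v else 0 := by
  split_ifs with h
  · rw [List.getD_append _ _ _ _ (by simpa using h), List.getD_eq_getElem _ _ (by simpa using h)]
    simp
  · by_cases h2 : i < k + a
    · rw [List.getD_eq_getElem _ _ (by simpa using h2)]
      rw [List.getElem_append_right (by simpa using h)]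
      simp
    · rw [List.getD_eq_default]
      simp; omega

/-- plusC of a step composition. -/
lemma CP_plusC_eq (N k v : ℕ) (α : ℕ → ℕ)
    (h : ((List.range N).map (fun j => α (j + 1))).Perm
      (List.replicate k v ++ List.replicate (N - k) 0)) :
    ∀ i, plusC N α i = if i - 1 < k then v else 0 := by
  have hms : (Multiset.range N).map (fun j => α (j + 1)) =
      ((List.range N).map (fun j => α (j + 1)) : List ℕ) := rfl
  have hsorted : List.Pairwise (· ≤ ·) (List.replicate (N - k) (0:ℕ) ++ List.replicate k v) := by
    rw [List.pairwise_append]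
    refine ⟨?_, ?_, ?_⟩
    · rw [List.pairwise_replicate]; right; rfl
    · rw [List.pairwise_replicate]; right; rfl
    · intro a ha b hb
      rw [List.eq_of_mem_replicate ha]
      exact Nat.zero_le _
  have hsort : (((Multiset.range N).map (fun j => α (j + 1))).sort (· ≤ ·)) =
      List.replicate (N - k) 0 ++ List.replicate k v := by
    apply List.Perm.eq_of_pairwise' (Multiset.pairwise_sort _ _) hsorted
    have h1 : (((Multiset.range N).map (fun j => α (j + 1))).sort (· ≤ ·) : Multiset ℕ)
        = ((List.replicate (N - k) (0:ℕ) ++ List.replicate k v : List ℕ) : Multiset ℕ) := by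
      rw [Multiset.sort_eq, hms]
      rw [Multiset.coe_eq_coe]
      exact h.trans (List.perm_append_comm)
    exact Multiset.coe_eq_coe.mp h1
  intro i
  unfold plusC
  rw [hsort, List.reverse_append, List.reverse_replicate, List.reverse_replicate]
  exact CP_getD_rep_rep k (N - k) v (i - 1)

/-- partial sums of a prefix step. -/
lemma CP_psum_front (k v : ℕ) (α : ℕ → ℕ) (j : ℕ)
    (h : ∀ i, 1 ≤ i → i ≤ j → α i = if i ≤ k then v else 0) :
    psumF α j = v * min j k := by
  unfold psumF
  have hc : ∀ i ∈ Finset.Icc 1 j, α i = if i ≤ k then v else 0 := by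
    intro i hi; rw [Finset.mem_Icc] at hi; exact h i hi.1 hi.2
  rw [Finset.sum_congr rfl hc, ← Finset.sum_filter]
  have : (Finset.Icc 1 j).filter (fun i => i ≤ k) = Finset.Icc 1 (min j k) := by
    ext x; simp [Finset.mem_filter, Finset.mem_Icc]; omega
  rw [this, Finset.sum_const, Nat.card_Icc, smul_eq_mul]
  cases Nat.le_total j k <;> simp [min_eq_left, min_eq_right, *] <;> ring_nf <;> omega

/-- partial sums of a tail step. -/
lemma CP_psum_tail (k v : ℕ) (α : ℕ → ℕ) (j : ℕ)
    (h : ∀ i, 1 ≤ i → i ≤ j → α i = if k < i then v else 0) :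
    psumF α j = v * (j - k) := by
  unfold psumF
  have hc : ∀ i ∈ Finset.Icc 1 j, α i = if k < i then v else 0 := by
    intro i hi; rw [Finset.mem_Icc] at hi; exact h i hi.1 hi.2
  rw [Finset.sum_congr rfl hc, ← Finset.sum_filter]
  have : (Finset.Icc 1 j).filter (fun i => k < i) = Finset.Icc (k+1) j := by
    ext x; simp [Finset.mem_filter, Finset.mem_Icc]; omega
  rw [this, Finset.sum_const, Nat.card_Icc, smul_eq_mul]
  have h2 : j + 1 - (k + 1) = j - k := by omega
  rw [h2, Nat.mul_comm]

lemma CP_list_two_blocks (a b v w : ℕ) (α : ℕ → ℕ)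
    (h1 : ∀ i, 1 ≤ i → i ≤ a → α i = v) (h2 : ∀ i, a < i → i ≤ a + b → α i = w) :
    (List.range (a + b)).map (fun j => α (j + 1)) =
      List.replicate a v ++ List.replicate b w := by
  rw [List.range_add, List.map_append, List.map_map]
  congr 1
  · exact CP_map_range_const a v _ (fun j hj => h1 (j + 1) (by omega) (by omega))
  · exact CP_map_range_const b w _ (fun j hj => h2 (a + j + 1) (by omega) (by omega))



/-- for `λ = ((md)^n)` and `β = (0^n, m^{nd})` viewed in `ℕ₀^{n(d+1)}`
(`gcd(m,n)=1`, `n ≥ 2`, `d ≥ 1`), the pair `(λ,β)` satisfies the critical-pair rank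
equations `(r(β,i) − i)·m = (λ_i − β_i)·n` for `1 ≤ i ≤ n(d+1)`, and `λ ⊳ β`. -/
theorem rectangle_critical_pair_holds
    (m n d : ℕ) (hm : 1 ≤ m) (hn : 2 ≤ n) (hd : 1 ≤ d)
    (hgcd : Nat.gcd m n = 1)
    (lam bet : ℕ → ℕ)
    (hlam : ∀ i, lam i = if 1 ≤ i ∧ i ≤ n then m * d else 0)
    (hbet : ∀ i, bet i = if n < i ∧ i ≤ n * (d + 1) then m else 0) :
    (∀ i, 1 ≤ i → i ≤ n * (d + 1) →
      ((rankF (n * (d + 1)) bet i : ℤ) - (i : ℤ)) * m =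
        ((lam i : ℤ) - (bet i : ℤ)) * n) ∧
    tltF (n * (d + 1)) lam bet := by
  have hNs : n * (d + 1) = n + n * d := by ring
  constructor
  · -- rank equations
    intro i hi1 hi2
    by_cases hin : i ≤ n
    · have hbi : bet i = 0 := by rw [hbet, if_neg (by omega)]
      have hli : lam i = m * d := by rw [hlam, if_pos ⟨hi1, hin⟩]
      have hf1 : (Finset.Icc 1 (n * (d + 1))).filter (fun j => bet i < bet j)
          = Finset.Icc (n + 1) (n * (d + 1)) := by
        ext x
        simp only [Finset.mem_filter, Finset.mem_Icc, hbi, hbet x]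
        split_ifs <;> omega
      have hf2 : (Finset.Icc 1 i).filter (fun j => bet j = bet i) = Finset.Icc 1 i := by
        ext x
        simp only [Finset.mem_filter, Finset.mem_Icc, hbi, hbet x]
        split_ifs <;> omega
      unfold rankF
      rw [hf1, hf2, Nat.card_Icc, Nat.card_Icc, hbi, hli]
      have e1 : n * (d + 1) + 1 - (n + 1) = n * d := by omega
      have e2 : i + 1 - 1 = i := by omega
      rw [e1, e2]
      push_cast
      ring
    · have hbi : bet i = m := by rw [hbet, if_pos ⟨by omega, hi2⟩]
      have hli : lam i = 0 := by rw [hlam, if_neg (by omega)]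
      have hf1 : (Finset.Icc 1 (n * (d + 1))).filter (fun j => bet i < bet j) = ∅ := by
        rw [Finset.filter_eq_empty_iff]
        intro x hx
        rw [hbi, hbet x]
        split_ifs <;> omega
      have hf2 : (Finset.Icc 1 i).filter (fun j => bet j = bet i) = Finset.Icc (n + 1) i := by
        ext x
        simp only [Finset.mem_filter, Finset.mem_Icc, hbi, hbet x]
        split_ifs <;> omega
      unfold rankF
      rw [hf1, hf2, Nat.card_Icc, hbi, hli]
      have e1 : i + 1 - (n + 1) = i - n := by omega
      rw [e1, Finset.card_empty]
      push_cast [Nat.cast_sub (show n ≤ i by omega)]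
      ring
  · -- tltF
    have hnnd : n ≤ n * d := Nat.le_mul_of_pos_right n (by omega)
    have hplam : ∀ i, plusC (n * (d + 1)) lam i = if i - 1 < n then m * d else 0 := by
      apply CP_plusC_eq
      have hl1 : (List.range (n * (d + 1))).map (fun j => lam (j + 1)) =
          List.replicate n (m * d) ++ List.replicate (n * d) 0 := by
        rw [hNs]
        exact CP_list_two_blocks n (n * d) (m * d) 0 lam
          (fun i h1 h2 => by rw [hlam, if_pos ⟨h1, h2⟩])
          (fun i h1 h2 => by rw [hlam, if_neg (by omega)])
      rw [hl1]
      have e : n * (d + 1) - n = n * d := by omega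
      rw [e]
    have hpbet : ∀ i, plusC (n * (d + 1)) bet i = if i - 1 < n * d then m else 0 := by
      apply CP_plusC_eq
      have hl1 : (List.range (n * (d + 1))).map (fun j => bet (j + 1)) =
          List.replicate n 0 ++ List.replicate (n * d) m := by
        rw [hNs]
        exact CP_list_two_blocks n (n * d) 0 m bet
          (fun i h1 h2 => by rw [hbet, if_neg (by omega)])
          (fun i h1 h2 => by rw [hbet, if_pos ⟨by omega, by omega⟩])
      rw [hl1]
      have e : n * (d + 1) - n * d = n := by omega
      rw [e]
      exact List.perm_append_comm
    have hpsum_lam : ∀ j, psumF lam j = (m * d) * min j n := by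
      intro j
      exact CP_psum_front n (m * d) lam j
        (fun i hi1 hij => by rw [hlam]; split_ifs <;> first | rfl | omega)
    have hpsum_bet : ∀ j, j ≤ n * (d + 1) → psumF bet j = m * (j - n) := by
      intro j hj
      exact CP_psum_tail n m bet j
        (fun i hi1 hij => by rw [hbet]; split_ifs <;> first | rfl | omega)
    have hsum_eq : psumF lam (n * (d + 1)) = psumF bet (n * (d + 1)) := by
      rw [hpsum_lam, hpsum_bet _ le_rfl]
      have e1 : min (n * (d + 1)) n = n := min_eq_right (by omega)
      have e2 : n * (d + 1) - n = n * d := by omega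
      rw [e1, e2]
      ring
    refine ⟨hsum_eq, ?_⟩
    by_cases hd1 : d = 1
    · -- d = 1 : plus parts coincide, use lam ≻ bet
      subst hd1
      right
      refine ⟨fun i _ _ => by rw [hplam, hpbet, Nat.mul_one, Nat.mul_one], ?_, ?_⟩
      · refine ⟨1, le_rfl, by omega, ?_⟩
        rw [hlam, hbet, if_pos ⟨le_rfl, by omega⟩, if_neg (by omega)]
        omega
      · intro j hj
        rw [hpsum_lam, hpsum_bet _ hj]
        rcases le_total j n with h | h
        · rw [min_eq_left h]
          have : j - n = 0 := by omega
          rw [this, Nat.mul_zero]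
          exact Nat.zero_le _
        · rw [min_eq_right h]
          have h1 : j - n ≤ n := by omega
          calc m * (j - n) ≤ m * n := Nat.mul_le_mul_left m h1
            _ = m * 1 * n := by ring
    · -- d ≥ 2 : plusC lam strictly dominates plusC bet
      left
      have hd2 : 2 ≤ d := by omega
      refine ⟨⟨1, le_rfl, by omega, ?_⟩, ?_⟩
      · rw [hplam, hpbet, if_pos (by omega : 1 - 1 < n), if_pos (by omega : 1 - 1 < n * d)]
        have : m * 2 ≤ m * d := Nat.mul_le_mul_left m hd2
        omega
      · intro j hj
        have hL : psumF (plusC (n * (d + 1)) lam) j = (m * d) * min j n :=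
          CP_psum_front n (m * d) _ j
            (fun i hi1 hij => by rw [hplam]; split_ifs <;> first | rfl | omega)
        have hB : psumF (plusC (n * (d + 1)) bet) j = m * min j (n * d) :=
          CP_psum_front (n * d) m _ j
            (fun i hi1 hij => by rw [hpbet]; split_ifs <;> first | rfl | omega)
        rw [hL, hB]
        rcases le_total j n with h | h
        · rw [min_eq_left h, min_eq_left (by omega : j ≤ n * d)]
          exact Nat.mul_le_mul_right j (Nat.le_mul_of_pos_right m (by omega))
        · rw [min_eq_right h]
          calc m * min j (n * d) ≤ m * (n * d) := Nat.mul_le_mul_left m (min_le_right _ _)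
            _ = m * d * n := by ring
end

section
/- Let N ∈ ℕ, m₀, n₀ ∈ ℕ with 2 ≤ n₀ ≤ N and n₀ ∤ m₀. Set d = gcd(m₀,n₀), n = n₀/d, and l = ⌈(N − n₀ + 1)/(n − 1)⌉ + 1, τ_l = (N − n₀ + 1) − (l−2)(n−1). Then 1 ≤ τ_l ≤ n − 1 and τ = (n₀ − 1, (n−1)^{l−2}, τ_l) is a partition of N with n dividing τ_i + 1 for 1 ≤ i ≤ l − 1. -/
/-- for `2 ≤ n₀ ≤ N` with `n₀ ∤ m₀`, setting `d = gcd(m₀,n₀)`,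
`n = n₀/d`, `l = ⌈(N − n₀ + 1)/(n − 1)⌉ + 1` and
`τ_l = (N − n₀ + 1) − (l−2)(n−1)`, one has `1 ≤ τ_l ≤ n − 1` and
`τ = (n₀ − 1, (n−1)^{l−2}, τ_l)` is a partition of `N` with `n ∣ τ_i + 1`
for `1 ≤ i ≤ l − 1`. -/
theorem isotype_partition_welldefined
    (N m₀ n₀ d n l τl : ℕ) (τ : ℕ → ℕ)
    (hm₀ : 1 ≤ m₀) (hn₀ : 2 ≤ n₀) (hn₀N : n₀ ≤ N) (hnd : ¬ n₀ ∣ m₀)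
    (hd : d = Nat.gcd m₀ n₀) (hn : n = n₀ / d)
    (hl : l = (N - n₀ + 1 + (n - 1) - 1) / (n - 1) + 1)
    (hτl : τl = (N - n₀ + 1) - (l - 2) * (n - 1))
    (hτ : ∀ i, τ i = if i = 1 then n₀ - 1
      else if i ≤ l - 1 then n - 1 else if i = l then τl else 0) :
    1 ≤ τl ∧ τl ≤ n - 1 ∧
    (∀ i, 1 ≤ i → τ (i + 1) ≤ τ i) ∧
    (∑ i ∈ Finset.Icc 1 l, τ i = N) ∧
    (∀ i, 1 ≤ i → i ≤ l - 1 → n ∣ τ i + 1) := by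
  have hd1 : 1 ≤ d := by
    subst hd; exact Nat.gcd_pos_of_pos_left n₀ hm₀
  have hdvd : d ∣ n₀ := hd ▸ Nat.gcd_dvd_right m₀ n₀
  have hdne : d ≠ n₀ := by
    intro h
    exact hnd (h ▸ hd ▸ Nat.gcd_dvd_left m₀ n₀)
  have hn2 : 2 ≤ n := by
    obtain ⟨c, hc⟩ := hdvd
    subst hn
    rw [hc, Nat.mul_div_cancel_left _ (by omega)]
    rcases c with _ | _ | c <;> omega
  have hnn0 : n ≤ n₀ := hn ▸ Nat.div_le_self n₀ d
  set k := n - 1 with hk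
  set M := N - n₀ + 1 with hM
  set q := (M + k - 1) / k with hq
  set r := (M + k - 1) % k with hr
  have hdiv : k * q + r = M + k - 1 := Nat.div_add_mod (M + k - 1) k
  have hmod : r < k := Nat.mod_lt _ (by omega)
  have hq1 : 1 ≤ q := (Nat.one_le_div_iff (by omega)).2 (by omega)
  have hl2 : 2 ≤ l := by omega
  have hmul : (l - 2) * k + k = k * q := by
    have h1 : l - 2 + 1 = q := by omega
    calc (l - 2) * k + k = (l - 2 + 1) * k := by ring
    _ = q * k := by rw [h1]
    _ = k * q := Nat.mul_comm _ _
  have hτl1 : 1 ≤ τl := by omega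
  have hτl2 : τl ≤ k := by omega
  have hndvd : n ∣ n₀ := Dvd.intro d (by rw [hn, Nat.div_mul_cancel hdvd])
  refine ⟨hτl1, hτl2, ?_, ?_, ?_⟩
  · intro i hi
    rw [hτ, hτ]
    split_ifs <;> omega
  · have e1 : Finset.Icc 1 l = insert 1 (Finset.Icc 2 l) := by
      ext x; simp [Finset.mem_Icc, Finset.mem_insert]; omega
    have e2 : Finset.Icc 2 l = insert l (Finset.Icc 2 (l - 1)) := by
      ext x; simp [Finset.mem_Icc, Finset.mem_insert]; omega
    have h1 : (1 : ℕ) ∉ Finset.Icc 2 l := by simp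
    have h2 : l ∉ Finset.Icc 2 (l - 1) := by simp [Finset.mem_Icc]; omega
    rw [e1, Finset.sum_insert h1, e2, Finset.sum_insert h2]
    have hc : ∑ i ∈ Finset.Icc 2 (l - 1), τ i = (l - 2) * k := by
      rw [Finset.sum_congr rfl (fun i hi => by
        simp only [Finset.mem_Icc] at hi
        rw [hτ, if_neg (by omega), if_pos hi.2])]
      rw [Finset.sum_const, Nat.card_Icc, smul_eq_mul]
      have hcard : l - 1 + 1 - 2 = l - 2 := by omega
      rw [hcard]
    have ht1 : τ 1 = n₀ - 1 := by rw [hτ]; simp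
    have htl : τ l = τl := by
      rw [hτ, if_neg (show ¬ l = 1 by omega), if_neg (show ¬ l ≤ l - 1 by omega),
        if_pos rfl]
    rw [hc, ht1, htl]
    omega
  · intro i h1 h2
    rw [hτ]
    by_cases hi1 : i = 1
    · rw [if_pos hi1]
      have : n₀ - 1 + 1 = n₀ := by omega
      rw [this]; exact hndvd
    · rw [if_neg hi1, if_pos h2]
      have : k + 1 = n := by omega
      rw [this]
end
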